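/- arXiv:1801.01975 — 5 statements merged into one kernel-verified Lean document; each statement's English description precedes it below -/
import Mathlib

section
/- Let G be a finite simple graph, π a vertex clique-partition of G, e_π a clique cluster-partition of V(G) based on π, and G^{md} any multiple clique cluster-whiskered graph built from this data. Then the graph G^{md} is vertex decomposable (equivalently, its independence complex Ind G^{md} is a (nonpure) vertex decomposable simplicial complex). -/
namespace Paper

variable {V : Type*}

/-- `S` is an independent vertex set of the graph `H` (equivalently, of any induced
subgraph of `H` containing `S`): its vertices are pairwise non-adjacent. -/
def IndepOn (H : SimpleGraph V) (S : Set V) : Prop :=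
  ∀ x ∈ S, ∀ y ∈ S, ¬ H.Adj x y

/-- `S` is a maximal independent vertex set of the graph `H`. -/
def MaxIndep (H : SimpleGraph V) (S : Set V) : Prop :=
  IndepOn H S ∧ ∀ T : Set V, IndepOn H T → S ⊆ T → T = S

/-- Vertex decomposability of the induced subgraph of `H` on the vertex set `s`:
either the induced subgraph has no edges, or there is a shedding vertex `x ∈ s`, i.e.
a vertex such that (1) the induced subgraphs on `s` minus the closed neighbourhood of
`x` and on `s \ {x}` are vertex decomposable, and (2) every independent set `S` of the
induced subgraph on `s` minus the closed neighbourhood of `x` extends by some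
neighbour `y` of `x` in `s` to an independent set `S ∪ {y}` of the induced subgraph
on `s \ {x}`. -/
inductive VD (H : SimpleGraph V) : Set V → Prop
  | noEdges (s : Set V) (h : ∀ x ∈ s, ∀ y ∈ s, ¬ H.Adj x y) : VD H s
  | shed (s : Set V) (x : V) (hx : x ∈ s)
      (hlink : VD H {y ∈ s | y ≠ x ∧ ¬ H.Adj x y})
      (hdel : VD H (s \ {x}))
      (hshed : ∀ S ⊆ {y ∈ s | y ≠ x ∧ ¬ H.Adj x y}, IndepOn H S →
        ∃ y ∈ s, H.Adj x y ∧ IndepOn H (S ∪ {y})) : VD H s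

/-- The data exhibiting `H`, restricted to the vertex set `T`, as a multiple clique
cluster-whiskered graph `G^{md}` of type `(d, r)` over the base graph `G` (the induced
subgraph of `H` on `Vg`), built from a vertex clique-partition `π = {W_1, …, W_d}`,
a clique cluster-partition `e_π = {U_1, …, U_s}` based on `π`, and added vertex
sets `A_1, …, A_d`, `B_1, …, B_r` inducing vertex decomposable subgraphs. -/
structure MccWhiskered (H : SimpleGraph V) (T : Set V) (d s r : ℕ) where
  hrs : r ≤ s
  /-- the vertex set of the base graph `G`; the edges of `G` are the edges of `H`
  between vertices of `Vg`, i.e. `G` is the induced subgraph of `H` on `Vg`. -/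
  Vg : Set V
  /-- the vertex clique-partition `π = {W_1, …, W_d}` of `G` -/
  W : Fin d → Set V
  /-- the clique cluster-partition `e_π = {U_1, …, U_s}` based on `π` -/
  U : Fin s → Set V
  W_ne : ∀ i, (W i).Nonempty
  W_sub : ∀ i, W i ⊆ Vg
  W_disj : ∀ i j, i ≠ j → Disjoint (W i) (W j)
  W_cover : Vg ⊆ ⋃ i, W i
  W_clique : ∀ i, ∀ x ∈ W i, ∀ y ∈ W i, x ≠ y → H.Adj x y
  U_ne : ∀ j, (U j).Nonempty
  U_sub : ∀ j, U j ⊆ Vg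
  U_disj : ∀ j k, j ≠ k → Disjoint (U j) (U k)
  U_cover : Vg ⊆ ⋃ j, U j
  /-- each clique of `π` is contained in some cluster -/
  W_in_U : ∀ i, ∃ j, W i ⊆ U j
  /-- two distinct cliques of `π` lying in a common cluster have no edge between them -/
  cluster_indep : ∀ i i', i ≠ i' → ∀ j, W i ⊆ U j → W i' ⊆ U j →
    ∀ x ∈ W i, ∀ y ∈ W i', ¬ H.Adj x y
  /-- the first `r` clusters are unions of at least two cliques of `π` -/
  U_multi : ∀ j : Fin r, ∃ i i' : Fin d, i ≠ i' ∧
    W i ⊆ U (Fin.castLE hrs j) ∧ W i' ⊆ U (Fin.castLE hrs j)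
  /-- the remaining `s - r` clusters each coincide with a single clique of `π` -/
  U_single : ∀ j : Fin s, r ≤ (j : ℕ) → ∃ i, U j = W i
  /-- the added whisker sets `A_1, …, A_d` -/
  A : Fin d → Set V
  /-- the added whisker sets `B_1, …, B_r` -/
  B : Fin r → Set V
  A_ne : ∀ i, (A i).Nonempty
  B_ne : ∀ j, (B j).Nonempty
  A_disj_Vg : ∀ i, Disjoint (A i) Vg
  B_disj_Vg : ∀ j, Disjoint (B j) Vg
  A_disj : ∀ i i', i ≠ i' → Disjoint (A i) (A i')
  B_disj : ∀ j j', j ≠ j' → Disjoint (B j) (B j')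
  AB_disj : ∀ i j, Disjoint (A i) (B j)
  /-- the vertex set of `G^{md}` -/
  total : T = Vg ∪ (⋃ i, A i) ∪ (⋃ j, B j)
  /-- each vertex of `A i` is adjacent to every vertex of `W i` -/
  A_adj : ∀ i, ∀ a ∈ A i, ∀ w ∈ W i, H.Adj a w
  /-- each vertex of `B j` is adjacent to every vertex of `U j` -/
  B_adj : ∀ j, ∀ b ∈ B j, ∀ u ∈ U (Fin.castLE hrs j), H.Adj b u
  /-- besides the edges of `G`, the whisker edges, and edges inside the sets
  `A i` and `B j`, there are no other edges in `G^{md}` -/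
  no_other_edges : ∀ x ∈ T, ∀ y ∈ T, H.Adj x y →
    (x ∈ Vg ∧ y ∈ Vg) ∨
    (∃ i, (x ∈ A i ∧ y ∈ W i) ∨ (y ∈ A i ∧ x ∈ W i) ∨ (x ∈ A i ∧ y ∈ A i)) ∨
    (∃ j, (x ∈ B j ∧ y ∈ U (Fin.castLE hrs j)) ∨
          (y ∈ B j ∧ x ∈ U (Fin.castLE hrs j)) ∨ (x ∈ B j ∧ y ∈ B j))
  /-- the induced subgraph on each `A i` is vertex decomposable -/
  A_vd : ∀ i, VD H (A i)
  /-- the induced subgraph on each `B j` is vertex decomposable -/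
  B_vd : ∀ j, VD H (B j)

/-!
A vertex `x` of the base graph lies in a clique `W i` carrying a nonempty whisker `A i`; a vertex
`a ∈ A i` is adjacent to `x` and all its neighbours lie in `N[x]`, so `x` is a shedding vertex.
Removing `x`, or its closed neighbourhood, leaves a whiskered graph of the same kind over a smaller
base graph, each whisker being kept or removed whole. Over an empty base graph what remains is a
union of vertex decomposable whiskers with no edges between them, which is vertex decomposable.
-/

open Function

variable {H : SimpleGraph V}

theorem IndepOn.mono {s t : Set V} (ht : IndepOn H t) (hst : s ⊆ t) : IndepOn H s :=
  fun x hx y hy => ht x (hst hx) y (hst hy)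

theorem IndepOn.union {s t : Set V} (hs : IndepOn H s) (ht : IndepOn H t)
    (hst : ∀ a ∈ s, ∀ b ∈ t, ¬ H.Adj a b) : IndepOn H (s ∪ t) := by
  rintro a (ha | ha) b (hb | hb) hab
  · exact hs a ha b hb hab
  · exact hst a ha b hb hab
  · exact hst b hb a ha hab.symm
  · exact ht a ha b hb hab

/-- Condition (2) for `x` to be a shedding vertex of the induced subgraph on `s`. -/
def ShedCondition (H : SimpleGraph V) (s : Set V) (x : V) : Prop :=
  ∀ S ⊆ {y ∈ s | y ≠ x ∧ ¬ H.Adj x y}, IndepOn H S → ∃ y ∈ s, H.Adj x y ∧ IndepOn H (S ∪ {y})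

theorem shedCondition_of_closedNbhd_subset {s : Set V} {x c : V} (hc : c ∈ s)
    (hxc : H.Adj x c) (hN : ∀ y ∈ s, H.Adj c y → y = x ∨ H.Adj x y) : ShedCondition H s x := by
  intro S hS hSind
  refine ⟨c, hc, hxc, hSind.union (fun a ha b hb hab => ?_) fun a ha b hb hab => ?_⟩
  · rw [ha, hb] at hab
    exact H.irrefl hab
  · rw [hb] at hab
    exact (hN a (hS ha).1 hab.symm).elim (hS ha).2.1 (hS ha).2.2

theorem VD.union_of_shed {s t : Set V} {z : V} (hz : z ∈ s)
    (hlink : VD H ({y ∈ s | y ≠ z ∧ ¬ H.Adj z y} ∪ t)) (hdel : VD H (s \ {z} ∪ t))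
    (hshed : ShedCondition H s z) (hst : ∀ a ∈ s, ∀ b ∈ t, ¬ H.Adj a b) : VD H (s ∪ t) := by
  have hzt : z ∉ t := by
    obtain ⟨y, hy, hzy, -⟩ := hshed ∅ (Set.empty_subset _) fun _ h => h.elim
    exact fun hz' => hst y hy z hz' hzy.symm
  refine VD.shed (s ∪ t) z (Or.inl hz) ?_ ?_ ?_
  · have hlink_eq : {y ∈ s ∪ t | y ≠ z ∧ ¬ H.Adj z y} = {y ∈ s | y ≠ z ∧ ¬ H.Adj z y} ∪ t := by
      ext y
      constructor
      · rintro ⟨hy | hy, hyz⟩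
        exacts [Or.inl ⟨hy, hyz⟩, Or.inr hy]
      · rintro (⟨hy, hyz⟩ | hy)
        exacts [⟨Or.inl hy, hyz⟩, ⟨Or.inr hy, fun h => hzt (h ▸ hy), hst z hz y hy⟩]
    rwa [hlink_eq]
  · rwa [Set.union_sdiff_distrib, Set.sdiff_singleton_eq_self hzt]
  · intro S hS hSind
    obtain ⟨y, hy, hzy, hind⟩ :=
      hshed (S ∩ s) (fun a ha => ⟨ha.2, (hS ha.1).2⟩) (hSind.mono Set.inter_subset_left)
    refine ⟨y, Or.inl hy, hzy, ?_⟩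
    have hsplit : S ∪ {y} ⊆ (S ∩ s ∪ {y}) ∪ S ∩ t := by
      rintro a (ha | rfl)
      · rcases (hS ha).1 with has | hat
        exacts [Or.inl (Or.inl ⟨ha, has⟩), Or.inr ⟨ha, hat⟩]
      · exact Or.inl (Or.inr rfl)
    refine (hind.union (hSind.mono Set.inter_subset_left) fun a ha b hb => ?_).mono hsplit
    rcases ha with ha | rfl
    exacts [hst a ha.2 b hb.2, hst a hy b hb.2]

theorem VD.union {s t : Set V} (hs : VD H s) (ht : VD H t)
    (hst : ∀ a ∈ s, ∀ b ∈ t, ¬ H.Adj a b) : VD H (s ∪ t) := by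
  induction hs with
  | noEdges s hs =>
    induction ht with
    | noEdges t ht => exact VD.noEdges _ (IndepOn.union hs ht hst)
    | shed t z hz _ _ hshed ihlink ihdel =>
      rw [Set.union_comm]
      refine VD.union_of_shed hz ?_ ?_ hshed fun a ha b hb hab => hst b hb a ha hab.symm
      · rw [Set.union_comm]
        exact ihlink fun a ha b hb => hst a ha b hb.1
      · rw [Set.union_comm]
        exact ihdel fun a ha b hb => hst a ha b hb.1
  | shed s z hz _ _ hshed ihlink ihdel =>
    exact VD.union_of_shed hz (ihlink fun a ha => hst a ha.1) (ihdel fun a ha => hst a ha.1)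
      hshed hst

theorem VD.iUnion {ι : Type*} [Finite ι] {C : ι → Set V} (hC : ∀ k, VD H (C k))
    (hsep : Pairwise fun k k' => ∀ a ∈ C k, ∀ b ∈ C k', ¬ H.Adj a b) : VD H (⋃ k, C k) := by
  classical
  cases nonempty_fintype ι
  suffices ∀ t : Finset ι, VD H (⋃ k ∈ t, C k) by simpa using this Finset.univ
  intro t
  induction t using Finset.induction_on with
  | empty => simpa using VD.noEdges (H := H) ∅ (by simp)
  | insert k t hk ih =>
    rw [Finset.set_biUnion_insert]
    refine (hC k).union ih ?_
    simp only [Set.mem_iUnion]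
    rintro a ha b ⟨k', hk', hb⟩
    exact hsep (ne_of_mem_of_not_mem hk' hk).symm a ha b hb

/-- The graph on `T` obtained from the base graph on `Vg` by joining each whisker `C k` completely
to its foot `D k`; `G^{md}` has the whiskers `A i` with feet `W i` and `B j` with feet `U j`. -/
structure IsWhiskering {ι : Type*} (H : SimpleGraph V) (T Vg : Set V) (C D : ι → Set V) :
    Prop where
  total : T = Vg ∪ ⋃ k, C k
  disjoint_base : ∀ k, Disjoint (C k) Vg
  pairwise_disjoint : Pairwise (Disjoint on C)
  foot_subset : ∀ k, D k ⊆ Vg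
  adj_foot : ∀ k, ∀ c ∈ C k, ∀ u ∈ D k, H.Adj c u
  adj_whisker : ∀ k, ∀ c ∈ C k, ∀ y ∈ T, H.Adj c y → y ∈ C k ∨ y ∈ D k

namespace IsWhiskering

variable {ι : Type*} {T Vg : Set V} {C D : ι → Set V}

theorem base_subset (h : IsWhiskering H T Vg C D) : Vg ⊆ T :=
  h.total ▸ Set.subset_union_left

theorem whisker_subset (h : IsWhiskering H T Vg C D) (k : ι) : C k ⊆ T :=
  h.total ▸ (Set.subset_iUnion C k).trans Set.subset_union_right

theorem ne_of_mem_base (h : IsWhiskering H T Vg C D) {k : ι} {c x : V} (hc : c ∈ C k)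
    (hx : x ∈ Vg) : c ≠ x :=
  fun hcx => Set.disjoint_left.1 (h.disjoint_base k) hc (hcx ▸ hx)

theorem not_adj_of_not_mem_foot (h : IsWhiskering H T Vg C D) {k : ι} {x c : V} (hx : x ∈ Vg)
    (hxk : x ∉ D k) (hc : c ∈ C k) : ¬ H.Adj x c := fun hxc =>
  (h.adj_whisker k c hc x (h.base_subset hx) hxc.symm).elim
    (fun hxC => h.ne_of_mem_base hxC hx rfl) hxk

theorem inter (h : IsWhiskering H T Vg C D) (P : Set V) :
    IsWhiskering H (T ∩ P) (Vg ∩ P) (C · ∩ P) (D · ∩ P) where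
  total := by rw [h.total, Set.union_inter_distrib_right, Set.iUnion_inter]
  disjoint_base k := (h.disjoint_base k).mono Set.inter_subset_left Set.inter_subset_left
  pairwise_disjoint k k' hkk' :=
    (h.pairwise_disjoint hkk').mono Set.inter_subset_left Set.inter_subset_left
  foot_subset k := Set.inter_subset_inter_left P (h.foot_subset k)
  adj_foot k c hc u hu := h.adj_foot k c hc.1 u hu.1
  adj_whisker k c hc y hy hcy :=
    (h.adj_whisker k c hc.1 y hy.1 hcy).imp (⟨·, hy.2⟩) (⟨·, hy.2⟩)

theorem whisker_inter_link_of_mem_foot (h : IsWhiskering H T Vg C D) {k : ι} {x : V}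
    (hxk : x ∈ D k) : C k ∩ {y | y ≠ x ∧ ¬ H.Adj x y} = ∅ :=
  Set.eq_empty_of_forall_notMem fun c hc => hc.2.2 (h.adj_foot k c hc.1 x hxk).symm

theorem whisker_inter_link_of_not_mem_foot (h : IsWhiskering H T Vg C D) {k : ι} {x : V}
    (hx : x ∈ Vg) (hxk : x ∉ D k) : C k ∩ {y | y ≠ x ∧ ¬ H.Adj x y} = C k :=
  Set.inter_eq_left.2 fun _ hc => ⟨h.ne_of_mem_base hc hx, h.not_adj_of_not_mem_foot hx hxk hc⟩

theorem vd_of_base_eq_empty [Finite ι] (h : IsWhiskering H T ∅ C D) (hC : ∀ k, VD H (C k)) :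
    VD H T := by
  rw [h.total, Set.empty_union]
  refine VD.iUnion hC fun k k' hkk' c hc c' hc' hcc' => ?_
  rcases h.adj_whisker k c hc c' (h.whisker_subset k' hc') hcc' with hc'k | hc'k
  · exact Set.disjoint_left.1 (h.pairwise_disjoint hkk') hc'k hc'
  · exact h.foot_subset k hc'k

theorem vd [Finite ι] (h : IsWhiskering H T Vg C D) (hVg : Vg.Finite) (hC : ∀ k, VD H (C k))
    (hcover : ∀ x ∈ Vg, ∃ k, x ∈ D k ∧ H.IsClique (D k) ∧ (C k).Nonempty) : VD H T := by
  induction hn : Vg.ncard using Nat.strong_induction_on generalizing T Vg C D with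
  | _ n ih =>
    rcases Vg.eq_empty_or_nonempty with rfl | ⟨x, hx⟩
    · exact h.vd_of_base_eq_empty hC
    obtain ⟨k₀, hxk₀, hclique, c₀, hc₀⟩ := hcover x hx
    have hrestrict (Q : Set V) (hxQ : x ∉ Q) (hCQ : ∀ k, VD H (C k ∩ Q))
        (hcoverQ : ∀ y ∈ Vg ∩ Q, ∃ k, y ∈ D k ∩ Q ∧ H.IsClique (D k ∩ Q) ∧ (C k ∩ Q).Nonempty) :
        VD H (T ∩ Q) :=
      ih _ (hn ▸ Set.ncard_lt_ncard ⟨Set.inter_subset_left, fun hsub => hxQ (hsub hx).2⟩ hVg)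
        (h.inter Q) (hVg.subset Set.inter_subset_left) hCQ hcoverQ rfl
    refine VD.shed T x (h.base_subset hx) ?_ ?_ ?_
    · refine hrestrict {y | y ≠ x ∧ ¬ H.Adj x y} (fun hxx => hxx.1 rfl) (fun k => ?_) ?_
      · by_cases hxk : x ∈ D k
        · rw [h.whisker_inter_link_of_mem_foot hxk]
          exact VD.noEdges ∅ (by simp)
        · rw [h.whisker_inter_link_of_not_mem_foot hx hxk]
          exact hC k
      · rintro y ⟨hy, hyx, hxy⟩
        obtain ⟨k, hyk, hcl, hne⟩ := hcover y hy
        have hxk : x ∉ D k := fun hxk => hxy (hcl hxk hyk (Ne.symm hyx))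
        refine ⟨k, ⟨hyk, hyx, hxy⟩, hcl.subset Set.inter_subset_left, ?_⟩
        rwa [h.whisker_inter_link_of_not_mem_foot hx hxk]
    · have hCx (k : ι) : C k ∩ {x}ᶜ = C k :=
        Set.inter_eq_left.2 fun _ hc => h.ne_of_mem_base hc hx
      refine hrestrict {x}ᶜ (fun hxx => hxx rfl) (fun k => by rw [hCx]; exact hC k) ?_
      rintro y ⟨hy, hyx⟩
      obtain ⟨k, hyk, hcl, hne⟩ := hcover y hy
      exact ⟨k, ⟨hyk, hyx⟩, hcl.subset Set.inter_subset_left, by rwa [hCx]⟩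
    · refine shedCondition_of_closedNbhd_subset (h.whisker_subset k₀ hc₀)
        (h.adj_foot k₀ c₀ hc₀ x hxk₀).symm fun y hy hc₀y => ?_
      rcases h.adj_whisker k₀ c₀ hc₀ y hy hc₀y with hyC | hyD
      · exact Or.inr (h.adj_foot k₀ y hyC x hxk₀).symm
      · by_cases hyx : y = x
        · exact Or.inl hyx
        · exact Or.inr (hclique hxk₀ hyD (Ne.symm hyx))

end IsWhiskering

namespace MccWhiskered

variable {T : Set V} {d s r : ℕ} (M : MccWhiskered H T d s r)

def whisker : Fin d ⊕ Fin r → Set V := Sum.elim M.A M.B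

def foot : Fin d ⊕ Fin r → Set V := Sum.elim M.W fun j => M.U (Fin.castLE M.hrs j)

theorem total_eq : T = M.Vg ∪ ⋃ k, M.whisker k :=
  M.total.trans (by rw [Set.union_assoc, whisker, Set.iUnion_sumElim])

theorem disjoint_whisker_base : ∀ k, Disjoint (M.whisker k) M.Vg
  | .inl i => M.A_disj_Vg i
  | .inr j => M.B_disj_Vg j

theorem pairwise_disjoint_whisker : Pairwise (Disjoint on M.whisker)
  | .inl i, .inl i', hne => M.A_disj i i' fun h => hne (congrArg _ h)
  | .inl i, .inr j, _ => M.AB_disj i j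
  | .inr j, .inl i, _ => (M.AB_disj i j).symm
  | .inr j, .inr j', hne => M.B_disj j j' fun h => hne (congrArg _ h)

theorem eq_of_mem_whisker {k k' : Fin d ⊕ Fin r} {c : V} (hc : c ∈ M.whisker k)
    (hc' : c ∈ M.whisker k') : k = k' := by
  by_contra hkk'
  exact Set.disjoint_left.1 (M.pairwise_disjoint_whisker hkk') hc hc'

theorem adj_whisker (k : Fin d ⊕ Fin r) (c : V) (hc : c ∈ M.whisker k) (y : V) (hy : y ∈ T)
    (hcy : H.Adj c y) : y ∈ M.whisker k ∨ y ∈ M.foot k := by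
  have hcT : c ∈ T := M.total_eq ▸ Or.inr (Set.mem_iUnion_of_mem k hc)
  have hcVg : c ∉ M.Vg := Set.disjoint_left.1 (M.disjoint_whisker_base k) hc
  rcases M.no_other_edges c hcT y hy hcy with
    ⟨hc', -⟩ | ⟨i, h | ⟨-, hc'⟩ | h⟩ | ⟨j, h | ⟨-, hc'⟩ | h⟩
  · exact absurd hc' hcVg
  · obtain rfl := M.eq_of_mem_whisker (k' := .inl i) hc h.1
    exact Or.inr h.2
  · exact absurd (M.W_sub i hc') hcVg
  · obtain rfl := M.eq_of_mem_whisker (k' := .inl i) hc h.1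
    exact Or.inl h.2
  · obtain rfl := M.eq_of_mem_whisker (k' := .inr j) hc h.1
    exact Or.inr h.2
  · exact absurd (M.U_sub _ hc') hcVg
  · obtain rfl := M.eq_of_mem_whisker (k' := .inr j) hc h.1
    exact Or.inl h.2

theorem isWhiskering : IsWhiskering H T M.Vg M.whisker M.foot where
  total := M.total_eq
  disjoint_base := M.disjoint_whisker_base
  pairwise_disjoint := M.pairwise_disjoint_whisker
  foot_subset
    | .inl i => M.W_sub i
    | .inr _ => M.U_sub _
  adj_foot
    | .inl i => M.A_adj i
    | .inr j => M.B_adj j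
  adj_whisker := M.adj_whisker

theorem vd_whisker : ∀ k, VD H (M.whisker k)
  | .inl i => M.A_vd i
  | .inr j => M.B_vd j

theorem exists_clique_foot (x : V) (hx : x ∈ M.Vg) :
    ∃ k, x ∈ M.foot k ∧ H.IsClique (M.foot k) ∧ (M.whisker k).Nonempty := by
  obtain ⟨i, hxi⟩ := Set.mem_iUnion.1 (M.W_cover hx)
  exact ⟨.inl i, hxi, fun a ha b hb hab => M.W_clique i a ha b hb hab, M.A_ne i⟩

end MccWhiskered

/-- **Theorem (main result).** For any finite simple graph `G`, any vertex
clique-partition `π` of `G`, any clique cluster-partition `e_π` based on `π`, and any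
multiple clique cluster-whiskered graph `G^{md}` built from this data, the graph
`G^{md}` is vertex decomposable. -/
theorem mccWhiskered_vertexDecomposable [Fintype V]
    (H : SimpleGraph V) (d s r : ℕ) (M : MccWhiskered H Set.univ d s r) :
    VD H Set.univ :=
  M.isWhiskering.vd (Set.toFinite _) M.vd_whisker M.exists_clique_foot

end Paper
end

section
/- Let G be a finite simple graph, π = {W_1,…,W_d} a vertex clique-partition of G, e_π = {U_1,…,U_s} a clique cluster-partition based on π in which exactly s − r of the clusters U_i coincide with a single clique W_j, and let G^{cc} be the clique cluster-whiskered graph built from this data. Then every maximal independent vertex set V of G^{cc} satisfies d ≤ |V| ≤ d + r. -/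
/-!
The sets `W i ∪ {a i}` and `{b j}` are `d + r` cliques of `G^{cc}` covering all its vertices,
so an independent set has at most one vertex in each of them, hence at most `d + r` vertices.
The `d` sets `W i ∪ {a i}` are pairwise disjoint, and a maximal independent set `S` meets each
of them: otherwise `a i`, whose neighbourhood is `W i`, could be added to `S`.
-/

namespace Paper

variable {V : Type*}

/-- The data exhibiting the graph `H` (on its full vertex type) as a clique
cluster-whiskered graph `G^{cc}` over the base graph `G` (the induced subgraph of `H`
on `Vg`), built from a vertex clique-partition `π = {W_1, …, W_d}` and a clique
cluster-partition `e_π = {U_1, …, U_s}` based on `π`, by adding `d + r` new vertices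
`a_1, …, a_d, b_1, …, b_r`, where `a i` is adjacent exactly to the vertices of `W i`
and `b j` is adjacent exactly to the vertices of `U j`. -/
structure CcWhiskered (H : SimpleGraph V) (d s r : ℕ) where
  hrs : r ≤ s
  /-- the vertex set of the base graph `G`; the edges of `G` are the edges of `H`
  between vertices of `Vg`, i.e. `G` is the induced subgraph of `H` on `Vg`. -/
  Vg : Set V
  /-- the vertex clique-partition `π = {W_1, …, W_d}` of `G` -/
  W : Fin d → Set V
  /-- the clique cluster-partition `e_π = {U_1, …, U_s}` based on `π` -/
  U : Fin s → Set V
  W_ne : ∀ i, (W i).Nonempty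
  W_sub : ∀ i, W i ⊆ Vg
  W_disj : ∀ i j, i ≠ j → Disjoint (W i) (W j)
  W_cover : Vg ⊆ ⋃ i, W i
  W_clique : ∀ i, ∀ x ∈ W i, ∀ y ∈ W i, x ≠ y → H.Adj x y
  U_ne : ∀ j, (U j).Nonempty
  U_sub : ∀ j, U j ⊆ Vg
  U_disj : ∀ j k, j ≠ k → Disjoint (U j) (U k)
  U_cover : Vg ⊆ ⋃ j, U j
  /-- each clique of `π` is contained in some cluster -/
  W_in_U : ∀ i, ∃ j, W i ⊆ U j
  /-- two distinct cliques of `π` lying in a common cluster have no edge between them -/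
  cluster_indep : ∀ i i', i ≠ i' → ∀ j, W i ⊆ U j → W i' ⊆ U j →
    ∀ x ∈ W i, ∀ y ∈ W i', ¬ H.Adj x y
  /-- the first `r` clusters are unions of at least two cliques of `π` -/
  U_multi : ∀ j : Fin r, ∃ i i' : Fin d, i ≠ i' ∧
    W i ⊆ U (Fin.castLE hrs j) ∧ W i' ⊆ U (Fin.castLE hrs j)
  /-- the remaining `s - r` clusters each coincide with a single clique of `π` -/
  U_single : ∀ j : Fin s, r ≤ (j : ℕ) → ∃ i, U j = W i
  /-- the added whisker vertices `a_1, …, a_d` -/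
  a : Fin d → V
  /-- the added whisker vertices `b_1, …, b_r` -/
  b : Fin r → V
  a_notin : ∀ i, a i ∉ Vg
  b_notin : ∀ j, b j ∉ Vg
  a_inj : Function.Injective a
  b_inj : Function.Injective b
  ab_ne : ∀ i j, a i ≠ b j
  /-- the vertex set of `G^{cc}` is `V(G)` together with the new vertices -/
  total : Set.univ = Vg ∪ Set.range a ∪ Set.range b
  /-- `a i` is adjacent exactly to the vertices of `W i` -/
  a_adj : ∀ i, ∀ w : V, H.Adj (a i) w ↔ w ∈ W i
  /-- `b j` is adjacent exactly to the vertices of `U j` -/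
  b_adj : ∀ j, ∀ w : V, H.Adj (b j) w ↔ w ∈ U (Fin.castLE hrs j)

open Set Function

section Independence

variable {H : SimpleGraph V} {S : Set V} {ι : Type*} {C : ι → Set V}

theorem IndepOn.exists_injective_of_subset_iUnion_isClique (hS : IndepOn H S)
    (hC : ∀ i, H.IsClique (C i)) (hSC : S ⊆ ⋃ i, C i) :
    ∃ f : S → ι, Injective f ∧ ∀ x, (x : V) ∈ C (f x) := by
  choose f hf using fun x : S => mem_iUnion.mp (hSC x.2)
  refine ⟨f, fun x y hxy => Subtype.ext ?_, hf⟩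
  by_contra hne
  exact hS x x.2 y y.2 (hC (f x) (hf x) (hxy ▸ hf y) hne)

theorem IndepOn.finite_of_subset_iUnion_isClique [Finite ι] (hS : IndepOn H S)
    (hC : ∀ i, H.IsClique (C i)) (hSC : S ⊆ ⋃ i, C i) : S.Finite := by
  obtain ⟨f, hf, -⟩ := hS.exists_injective_of_subset_iUnion_isClique hC hSC
  exact Finite.of_injective f hf

theorem IndepOn.ncard_le_of_subset_iUnion_isClique [Finite ι] (hS : IndepOn H S)
    (hC : ∀ i, H.IsClique (C i)) (hSC : S ⊆ ⋃ i, C i) : S.ncard ≤ Nat.card ι := by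
  obtain ⟨f, hf, -⟩ := hS.exists_injective_of_subset_iUnion_isClique hC hSC
  rw [← Nat.card_coe_set_eq]
  exact Nat.card_le_card_of_injective f hf

theorem MaxIndep.exists_adj_of_notMem (hS : MaxIndep H S) {v : V} (hv : v ∉ S) :
    ∃ x ∈ S, H.Adj v x := by
  by_contra! h
  refine hv (hS.2 (insert v S) ?_ (subset_insert v S) ▸ mem_insert v S)
  rintro x (rfl | hx) y (rfl | hy)
  · exact H.irrefl
  · exact h y hy
  · exact fun hxy => h x hx hxy.symm
  · exact hS.1 x hx y hy

theorem natCard_le_ncard_of_pairwise_disjoint_inter_nonempty (hS : S.Finite)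
    (hdisj : Pairwise (Disjoint on C)) (hmeet : ∀ i, (S ∩ C i).Nonempty) :
    Nat.card ι ≤ S.ncard := by
  choose f hf using hmeet
  rw [← ncard_univ]
  refine ncard_le_ncard_of_injOn f (fun i _ => (hf i).1) (fun i _ j _ hij => ?_) hS
  by_contra hne
  exact (hdisj hne).ne_of_mem (hf i).2 (hij ▸ (hf j).2) rfl

end Independence

namespace CcWhiskered

variable {H : SimpleGraph V} {d s r : ℕ} (M : CcWhiskered H d s r)

def whiskeredClique (i : Fin d) : Set V :=
  insert (M.a i) (M.W i)

theorem isClique_whiskeredClique (i : Fin d) : H.IsClique (M.whiskeredClique i) :=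
  SimpleGraph.isClique_insert.mpr
    ⟨M.W_clique i, fun w hw _ => (M.a_adj i w).mpr hw⟩

theorem a_notMem_W (i j : Fin d) : M.a i ∉ M.W j :=
  fun h => M.a_notin i (M.W_sub j h)

theorem pairwise_disjoint_whiskeredClique : Pairwise (Disjoint on M.whiskeredClique) := by
  intro i j hij
  rw [onFun, whiskeredClique, whiskeredClique, disjoint_insert_left, disjoint_insert_right]
  refine ⟨?_, M.a_notMem_W j i, M.W_disj i j hij⟩
  rintro (h | h)
  exacts [hij (M.a_inj h), M.a_notMem_W i j h]

def cliqueCover : Fin d ⊕ Fin r → Set V :=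
  Sum.elim M.whiskeredClique fun j => {M.b j}

theorem isClique_cliqueCover : ∀ k, H.IsClique (M.cliqueCover k)
  | .inl i => M.isClique_whiskeredClique i
  | .inr j => SimpleGraph.isClique_singleton (M.b j)

theorem mem_iUnion_cliqueCover (x : V) : x ∈ ⋃ k, M.cliqueCover k := by
  have hx : x ∈ M.Vg ∪ range M.a ∪ range M.b := M.total ▸ mem_univ x
  rcases hx with (hx | ⟨i, rfl⟩) | ⟨j, rfl⟩
  · obtain ⟨i, hi⟩ := mem_iUnion.mp (M.W_cover hx)
    exact mem_iUnion.mpr ⟨.inl i, mem_insert_of_mem _ hi⟩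
  · exact mem_iUnion.mpr ⟨.inl i, mem_insert _ _⟩
  · exact mem_iUnion.mpr ⟨.inr j, rfl⟩

theorem inter_whiskeredClique_nonempty {S : Set V} (hS : MaxIndep H S) (i : Fin d) :
    (S ∩ M.whiskeredClique i).Nonempty := by
  by_cases ha : M.a i ∈ S
  · exact ⟨M.a i, ha, mem_insert _ _⟩
  · obtain ⟨x, hx, hax⟩ := hS.exists_adj_of_notMem ha
    exact ⟨x, hx, mem_insert_of_mem _ ((M.a_adj i x).mp hax)⟩

end CcWhiskered

theorem ccWhiskered_maxIndep_card_bounds_general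
    (H : SimpleGraph V) (d s r : ℕ) (M : CcWhiskered H d s r)
    (S : Set V) (hS : MaxIndep H S) :
    d ≤ S.ncard ∧ S.ncard ≤ d + r := by
  have hcover : S ⊆ ⋃ k, M.cliqueCover k := fun x _ => M.mem_iUnion_cliqueCover x
  have hfin : S.Finite := hS.1.finite_of_subset_iUnion_isClique M.isClique_cliqueCover hcover
  constructor
  · simpa using natCard_le_ncard_of_pairwise_disjoint_inter_nonempty hfin
      M.pairwise_disjoint_whiskeredClique (M.inter_whiskeredClique_nonempty hS)
  · simpa using hS.1.ncard_le_of_subset_iUnion_isClique M.isClique_cliqueCover hcover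

/-- **Theorem.** For a clique cluster-whiskered graph `G^{cc}` built from a vertex
clique-partition `π = {W_1, …, W_d}` and a clique cluster-partition with exactly `r`
clusters that are unions of at least two cliques, every maximal independent vertex set
`S` of `G^{cc}` satisfies `d ≤ |S| ≤ d + r`. -/
theorem ccWhiskered_maxIndep_card_bounds [Fintype V]
    (H : SimpleGraph V) (d s r : ℕ) (M : CcWhiskered H d s r)
    (S : Set V) (hS : MaxIndep H S) :
    d ≤ S.ncard ∧ S.ncard ≤ d + r :=
  ccWhiskered_maxIndep_card_bounds_general H d s r M S hS

end Paper
end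

section
/- Let G be a finite simple graph, π a vertex clique-partition of G, e_π a clique cluster-partition based on π, G^{md} any multiple clique cluster-whiskered graph built from this data, and v any vertex of G. Then there exist a vertex clique-partition π_1 of G \ v and a clique cluster-partition e_{π_1} based on π_1 such that the induced subgraph G^{md} \ v is isomorphic to the disjoint union of some multiple clique cluster-whiskered graph (G \ v)^{md} built on G \ v from π_1 and e_{π_1} and a (possibly empty) vertex decomposable graph. -/
namespace Paper

variable {V : Type*}

lemma VD_union_aux (H : SimpleGraph V) {s t : Set V}
    (hs : ∀ x ∈ s, ∀ y ∈ s, ¬ H.Adj x y) (ht : VD H t) :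
    Disjoint s t → (∀ x ∈ s, ∀ y ∈ t, ¬ H.Adj x y) → VD H (s ∪ t) := by
  induction ht with
  | noEdges t h =>
    intro hd hc
    refine VD.noEdges _ ?_
    rintro x (hx | hx) y (hy | hy)
    · exact hs x hx y hy
    · exact hc x hx y hy
    · exact fun h' => hc y hy x hx h'.symm
    · exact h x hx y hy
  | shed t x hx hlink hdel hshed ihlink ihdel =>
    intro hd hc
    have hxs : x ∉ s := fun h => hd.ne_of_mem h hx rfl
    refine VD.shed _ x (Or.inr hx) ?_ ?_ ?_
    · have heq : {y ∈ s ∪ t | y ≠ x ∧ ¬ H.Adj x y}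
          = s ∪ {y ∈ t | y ≠ x ∧ ¬ H.Adj x y} := by
        ext y
        constructor
        · rintro ⟨hy | hy, h1, h2⟩
          · exact Or.inl hy
          · exact Or.inr ⟨hy, h1, h2⟩
        · rintro (hy | ⟨hy, h1, h2⟩)
          · exact ⟨Or.inl hy, fun h => hxs (h ▸ hy),
              fun h => hc y hy x hx h.symm⟩
          · exact ⟨Or.inr hy, h1, h2⟩
      rw [heq]
      exact ihlink (hd.mono_right (Set.sep_subset _ _))
        (fun a ha b hb => hc a ha b hb.1)
    · have heq : (s ∪ t) \ {x} = s ∪ (t \ {x}) := by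
        ext y
        simp only [Set.mem_diff, Set.mem_union, Set.mem_singleton_iff]
        constructor
        · rintro ⟨hy | hy, h1⟩
          exacts [Or.inl hy, Or.inr ⟨hy, h1⟩]
        · rintro (hy | ⟨hy, h1⟩)
          exacts [⟨Or.inl hy, fun h => hxs (h ▸ hy)⟩, ⟨Or.inr hy, h1⟩]
      rw [heq]
      exact ihdel (hd.mono_right Set.diff_subset) (fun a ha b hb => hc a ha b hb.1)
    · intro S hS hSi
      have hS' : S ∩ t ⊆ {y ∈ t | y ≠ x ∧ ¬ H.Adj x y} := by
        rintro y ⟨hy, hyt⟩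
        rcases hS hy with ⟨(h | h), h1, h2⟩
        · exact absurd rfl (hd.ne_of_mem h hyt)
        · exact ⟨hyt, h1, h2⟩
      obtain ⟨y, hyt, hadj, hind⟩ := hshed (S ∩ t) hS'
        (fun a ha b hb => hSi a ha.1 b hb.1)
      refine ⟨y, Or.inr hyt, hadj, ?_⟩
      rintro a (ha | ha) b (hb | hb)
      · exact hSi a ha b hb
      · rw [Set.mem_singleton_iff] at hb; subst hb
        rcases hS ha with ⟨(h | h), _, _⟩
        · exact hc a h b hyt
        · exact hind a (Or.inl ⟨ha, h⟩) b (Or.inr rfl)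
      · rw [Set.mem_singleton_iff] at ha; subst ha
        rcases hS hb with ⟨(h | h), _, _⟩
        · exact fun hadj' => hc b h a hyt hadj'.symm
        · exact hind a (Or.inr rfl) b (Or.inl ⟨hb, h⟩)
      · simp only [Set.mem_singleton_iff] at ha hb
        subst ha; subst hb; exact fun h => (H.irrefl h)

lemma VD_union (H : SimpleGraph V) {s t : Set V}
    (hs : VD H s) (ht : VD H t) (hd : Disjoint s t)
    (hc : ∀ x ∈ s, ∀ y ∈ t, ¬ H.Adj x y) : VD H (s ∪ t) := by
  induction hs generalizing t with
  | noEdges s h => exact VD_union_aux H h ht hd hc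
  | shed s x hx hlink hdel hshed ihlink ihdel =>
    have hxt : x ∉ t := fun h => (hd.ne_of_mem hx h) rfl
    refine VD.shed _ x (Or.inl hx) ?_ ?_ ?_
    · have heq : {y ∈ s ∪ t | y ≠ x ∧ ¬ H.Adj x y}
          = {y ∈ s | y ≠ x ∧ ¬ H.Adj x y} ∪ t := by
        ext y
        constructor
        · rintro ⟨hy | hy, h1, h2⟩
          · exact Or.inl ⟨hy, h1, h2⟩
          · exact Or.inr hy
        · rintro (⟨hy, h1, h2⟩ | hy)
          · exact ⟨Or.inl hy, h1, h2⟩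
          · exact ⟨Or.inr hy, fun h => hxt (h ▸ hy), fun h => hc x hx y hy h⟩
      rw [heq]
      exact ihlink ht (hd.mono_left (Set.sep_subset _ _))
        (fun a ha b hb => hc a ha.1 b hb)
    · have heq : (s ∪ t) \ {x} = (s \ {x}) ∪ t := by
        ext y
        simp only [Set.mem_diff, Set.mem_union, Set.mem_singleton_iff]
        constructor
        · rintro ⟨hy | hy, h1⟩
          exacts [Or.inl ⟨hy, h1⟩, Or.inr hy]
        · rintro (⟨hy, h1⟩ | hy)
          exacts [⟨Or.inl hy, h1⟩, ⟨Or.inr hy, fun h => hxt (h ▸ hy)⟩]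
      rw [heq]
      exact ihdel ht (hd.mono_left Set.diff_subset) (fun a ha b hb => hc a ha.1 b hb)
    · intro S hS hSi
      have hS' : S ∩ s ⊆ {y ∈ s | y ≠ x ∧ ¬ H.Adj x y} := by
        rintro y ⟨hy, hys⟩
        rcases hS hy with ⟨(h | h), h1, h2⟩
        · exact ⟨hys, h1, h2⟩
        · exact absurd rfl (hd.ne_of_mem hys h)
      obtain ⟨y, hys, hadj, hind⟩ := hshed (S ∩ s) hS'
        (fun a ha b hb => hSi a ha.1 b hb.1)
      refine ⟨y, Or.inl hys, hadj, ?_⟩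
      rintro a (ha | ha) b (hb | hb)
      · exact hSi a ha b hb
      · rw [Set.mem_singleton_iff] at hb; subst hb
        rcases hS ha with ⟨(h | h), _, _⟩
        · exact hind a (Or.inl ⟨ha, h⟩) b (Or.inr rfl)
        · exact fun hadj' => hc b hys a h hadj'.symm
      · rw [Set.mem_singleton_iff] at ha; subst ha
        rcases hS hb with ⟨(h | h), _, _⟩
        · exact hind a (Or.inr rfl) b (Or.inl ⟨hb, h⟩)
        · exact hc a hys b h
      · simp only [Set.mem_singleton_iff] at ha hb
        subst ha; subst hb; exact fun h => (H.irrefl h)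

lemma succAbove_val {n : ℕ} (p : Fin (n+1)) (k : Fin n) :
    ((p.succAbove k) : ℕ) = if (k:ℕ) < (p:ℕ) then (k:ℕ) else (k:ℕ)+1 := by
  rw [Fin.succAbove]
  split_ifs with h1 h2 h2 <;> simp_all [Fin.lt_def]

/-- **Lemma (deletion).** For any vertex `v` of the base graph `G`, there exist a
vertex clique-partition `π₁` of `G \ v` and a clique cluster-partition based on `π₁`
such that the induced subgraph `G^{md} \ v` is (isomorphic to) the disjoint union of a
multiple clique cluster-whiskered graph `(G \ v)^{md}`, built on the base graph
`G \ v`, and a possibly empty vertex decomposable graph `C` with no edges to the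
rest. -/
theorem mccWhiskered_delete_vertex [Fintype V]
    (H : SimpleGraph V) (d s r : ℕ) (M : MccWhiskered H Set.univ d s r)
    (v : V) (hv : v ∈ M.Vg) :
    ∃ (d' s' r' : ℕ) (C : Set V), C ⊆ Set.univ \ {v} ∧ VD H C ∧
      (∀ x ∈ C, ∀ y ∈ (Set.univ \ {v}) \ C, ¬ H.Adj x y) ∧
      ∃ M' : MccWhiskered H ((Set.univ \ {v}) \ C) d' s' r', M'.Vg = M.Vg \ {v} := by
  classical
  obtain ⟨i0, hvW⟩ : ∃ i, v ∈ M.W i := by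
    have := M.W_cover hv
    simpa using this
  obtain ⟨j0, hWU⟩ := M.W_in_U i0
  have hvU : v ∈ M.U j0 := hWU hvW
  have hWv : ∀ i, i ≠ i0 → v ∉ M.W i := fun i hi h =>
    (M.W_disj i i0 hi).ne_of_mem h hvW rfl
  have hUv : ∀ j, j ≠ j0 → v ∉ M.U j := fun j hj h =>
    (M.U_disj j j0 hj).ne_of_mem h hvU rfl
  have hvA : ∀ i, v ∉ M.A i := fun i h => (M.A_disj_Vg i).ne_of_mem h hv rfl
  have hvB : ∀ j, v ∉ M.B j := fun j h => (M.B_disj_Vg j).ne_of_mem h hv rfl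
  have mem_total : ∀ x : V, x ∈ M.Vg ∪ (⋃ i, M.A i) ∪ (⋃ j, M.B j) := by
    intro x
    rw [← M.total]
    trivial
  have cover_decomp : ∀ j : Fin s, ∀ x ∈ M.U j, ∃ i, x ∈ M.W i ∧ M.W i ⊆ M.U j := by
    intro j x hx
    obtain ⟨i, hi⟩ : ∃ i, x ∈ M.W i := by
      have := M.W_cover (M.U_sub j hx)
      simpa using this
    obtain ⟨j', hj'⟩ := M.W_in_U i
    have : j' = j := by
      by_contra hne
      exact (M.U_disj j' j hne).ne_of_mem (hj' hi) hx rfl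
    exact ⟨i, hi, this ▸ hj'⟩
  by_cases hcase1 : ∃ w ∈ M.W i0, w ≠ v
  · -- Case 1 : the clique of v has another vertex
    obtain ⟨w, hwW, hwv⟩ := hcase1
    have key : ∀ (i : Fin d) (j : Fin s), M.W i \ {v} ⊆ M.U j \ {v} → M.W i ⊆ M.U j := by
      intro i j hsub x hx
      by_cases hxv : x = v
      · subst hxv
        have hi : i = i0 := by
          by_contra hne
          exact hWv i hne hx
        subst hi
        have hw' : w ∈ M.U j := (hsub ⟨hwW, hwv⟩).1
        have hj : j = j0 := by
          by_contra hne
          exact (M.U_disj j j0 hne).ne_of_mem hw' (hWU hwW) rfl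
        exact hj ▸ hvU
      · exact (hsub ⟨hx, hxv⟩).1
    refine ⟨d, s, r, ∅, Set.empty_subset _, VD.noEdges _ (by simp), by simp, ?_⟩
    refine ⟨{ hrs := M.hrs
              Vg := M.Vg \ {v}
              W := fun i => M.W i \ {v}
              U := fun j => M.U j \ {v}
              W_ne := ?_
              W_sub := fun i => Set.diff_subset_diff_left (M.W_sub i)
              W_disj := fun i j h => (M.W_disj i j h).mono Set.diff_subset Set.diff_subset
              W_cover := ?_
              W_clique := fun i x hx y hy => M.W_clique i x hx.1 y hy.1
              U_ne := ?_
              U_sub := fun j => Set.diff_subset_diff_left (M.U_sub j)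
              U_disj := fun j k h => (M.U_disj j k h).mono Set.diff_subset Set.diff_subset
              U_cover := ?_
              W_in_U := fun i => (M.W_in_U i).imp fun j hj => Set.diff_subset_diff_left hj
              cluster_indep := fun i i' hne j h1 h2 x hx y hy =>
                M.cluster_indep i i' hne j (key i j h1) (key i' j h2) x hx.1 y hy.1
              U_multi := ?_
              U_single := ?_
              A := M.A
              B := M.B
              A_ne := M.A_ne
              B_ne := M.B_ne
              A_disj_Vg := fun i => (M.A_disj_Vg i).mono_right Set.diff_subset
              B_disj_Vg := fun j => (M.B_disj_Vg j).mono_right Set.diff_subset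
              A_disj := M.A_disj
              B_disj := M.B_disj
              AB_disj := M.AB_disj
              total := ?_
              A_adj := fun i a ha w' hw' => M.A_adj i a ha w' hw'.1
              B_adj := fun j b hb u hu => M.B_adj j b hb u hu.1
              no_other_edges := ?_
              A_vd := M.A_vd
              B_vd := M.B_vd }, rfl⟩
    · intro i
      by_cases hi : i = i0
      · subst hi
        exact ⟨w, hwW, hwv⟩
      · obtain ⟨x, hx⟩ := M.W_ne i
        exact ⟨x, hx, fun h => hWv i hi (Set.mem_singleton_iff.1 h ▸ hx)⟩
    · rintro x ⟨hx, hxv⟩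
      obtain ⟨i, hi⟩ : ∃ i, x ∈ M.W i := by
        have := M.W_cover hx
        simpa using this
      exact Set.mem_iUnion.2 ⟨i, hi, hxv⟩
    · intro j
      by_cases hj : j = j0
      · subst hj
        exact ⟨w, hWU hwW, hwv⟩
      · obtain ⟨x, hx⟩ := M.U_ne j
        exact ⟨x, hx, fun h => hUv j hj (Set.mem_singleton_iff.1 h ▸ hx)⟩
    · rintro x ⟨hx, hxv⟩
      obtain ⟨j, hj⟩ : ∃ j, x ∈ M.U j := by
        have := M.U_cover hx
        simpa using this
      exact Set.mem_iUnion.2 ⟨j, hj, hxv⟩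
    · intro j
      obtain ⟨i, i', hne, h1, h2⟩ := M.U_multi j
      exact ⟨i, i', hne, Set.diff_subset_diff_left h1, Set.diff_subset_diff_left h2⟩
    · intro j hj
      obtain ⟨i, h⟩ := M.U_single j hj
      exact ⟨i, by rw [h]⟩
    · ext x
      simp only [Set.mem_diff, Set.mem_union, Set.mem_univ, Set.mem_empty_iff_false,
        Set.mem_singleton_iff, true_and, not_false_iff, and_true]
      constructor
      · intro hxv
        rcases mem_total x with (hx | hx) | hx
        · exact Or.inl (Or.inl ⟨hx, hxv⟩)
        · exact Or.inl (Or.inr hx)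
        · exact Or.inr hx
      · rintro ((⟨hx, hxv⟩ | hx) | hx)
        · exact hxv
        · obtain ⟨i, hi⟩ := Set.mem_iUnion.1 hx
          exact fun h => hvA i (h ▸ hi)
        · obtain ⟨j, hj⟩ := Set.mem_iUnion.1 hx
          exact fun h => hvB j (h ▸ hj)
    · intro x hx y hy hadj
      have hxv : x ≠ v := fun h => hx.1.2 (Set.mem_singleton_iff.2 h)
      have hyv : y ≠ v := fun h => hy.1.2 (Set.mem_singleton_iff.2 h)
      rcases M.no_other_edges x trivial y trivial hadj with h | ⟨i, h⟩ | ⟨j, h⟩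
      · exact Or.inl ⟨⟨h.1, hxv⟩, h.2, hyv⟩
      · refine Or.inr (Or.inl ⟨i, ?_⟩)
        rcases h with ⟨h1, h2⟩ | ⟨h1, h2⟩ | h
        · exact Or.inl ⟨h1, h2, hyv⟩
        · exact Or.inr (Or.inl ⟨h1, h2, hxv⟩)
        · exact Or.inr (Or.inr h)
      · refine Or.inr (Or.inr ⟨j, ?_⟩)
        rcases h with ⟨h1, h2⟩ | ⟨h1, h2⟩ | h
        · exact Or.inl ⟨h1, h2, hyv⟩
        · exact Or.inr (Or.inl ⟨h1, h2, hxv⟩)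
        · exact Or.inr (Or.inr h)
  · -- Case 2 : W i0 = {v}
    push_neg at hcase1
    have hW0 : M.W i0 = {v} := by
      ext x
      simp only [Set.mem_singleton_iff]
      exact ⟨fun hx => hcase1 x hx, fun h => h ▸ hvW⟩
    obtain ⟨m, rfl⟩ : ∃ m, d = m + 1 := ⟨d - 1, by have := i0.isLt; omega⟩
    have hAne : ∀ ι : Fin m, i0.succAbove ι ≠ i0 := fun ι => Fin.succAbove_ne i0 ι
    have hvW' : ∀ ι : Fin m, v ∉ M.W (i0.succAbove ι) := fun ι => hWv _ (hAne ι)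
    have hCsub : M.A i0 ⊆ Set.univ \ {v} := fun x hx =>
      ⟨trivial, fun h => hvA i0 (Set.mem_singleton_iff.1 h ▸ hx)⟩
    have hCedge : ∀ x ∈ M.A i0, ∀ y ∈ (Set.univ \ {v}) \ M.A i0, ¬ H.Adj x y := by
      intro x hx y hy hadj
      have hyv : y ≠ v := fun h => hy.1.2 (Set.mem_singleton_iff.2 h)
      rcases M.no_other_edges x trivial y trivial hadj with h | ⟨i, h⟩ | ⟨j, h⟩
      · exact (M.A_disj_Vg i0).ne_of_mem hx h.1 rfl
      · rcases h with ⟨h1, h2⟩ | ⟨h1, h2⟩ | ⟨h1, h2⟩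
        · have hi : i = i0 := by
            by_contra hne
            exact (M.A_disj i i0 hne).ne_of_mem h1 hx rfl
          subst hi
          rw [hW0] at h2
          exact hyv h2
        · exact (M.A_disj_Vg i0).ne_of_mem hx (M.W_sub i h2) rfl
        · have hi : i = i0 := by
            by_contra hne
            exact (M.A_disj i i0 hne).ne_of_mem h1 hx rfl
          exact hy.2 (hi ▸ h2)
      · rcases h with ⟨h1, h2⟩ | ⟨h1, h2⟩ | ⟨h1, h2⟩
        · exact (M.AB_disj i0 j).ne_of_mem hx h1 rfl
        · exact (M.A_disj_Vg i0).ne_of_mem hx (M.U_sub _ h2) rfl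
        · exact (M.AB_disj i0 j).ne_of_mem hx h1 rfl
    by_cases hj0r : (j0 : ℕ) < r
    · -- subcases 2b / 2c
      by_cases hmulti : ∃ i i' : Fin (m+1), i ≠ i' ∧ i ≠ i0 ∧ i' ≠ i0 ∧
          M.W i ⊆ M.U j0 ∧ M.W i' ⊆ M.U j0
      · -- subcase 2b : cluster of v keeps at least two cliques
        refine ⟨m, s, r, M.A i0, hCsub, M.A_vd i0, hCedge, ?_⟩
        refine ⟨{ hrs := M.hrs
                  Vg := M.Vg \ {v}
                  W := fun ι => M.W (i0.succAbove ι)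
                  U := fun j => M.U j \ {v}
                  W_ne := fun ι => M.W_ne _
                  W_sub := fun ι x hx => ⟨M.W_sub _ hx,
                    fun h => hvW' ι (Set.mem_singleton_iff.1 h ▸ hx)⟩
                  W_disj := fun ι ι' h =>
                    M.W_disj _ _ (fun he => h (Fin.succAbove_right_injective he))
                  W_cover := ?_
                  W_clique := fun ι x hx y hy => M.W_clique _ x hx y hy
                  U_ne := ?_
                  U_sub := fun j => Set.diff_subset_diff_left (M.U_sub j)
                  U_disj := fun j k h =>
                    (M.U_disj j k h).mono Set.diff_subset Set.diff_subset
                  U_cover := ?_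
                  W_in_U := ?_
                  cluster_indep := fun ι ι' hne j h1 h2 =>
                    M.cluster_indep _ _ (fun he => hne (Fin.succAbove_right_injective he)) j
                      (fun x hx => (h1 hx).1) (fun x hx => (h2 hx).1)
                  U_multi := ?_
                  U_single := ?_
                  A := fun ι => M.A (i0.succAbove ι)
                  B := M.B
                  A_ne := fun ι => M.A_ne _
                  B_ne := M.B_ne
                  A_disj_Vg := fun ι => (M.A_disj_Vg _).mono_right Set.diff_subset
                  B_disj_Vg := fun j => (M.B_disj_Vg j).mono_right Set.diff_subset
                  A_disj := fun ι ι' h =>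
                    M.A_disj _ _ (fun he => h (Fin.succAbove_right_injective he))
                  B_disj := M.B_disj
                  AB_disj := fun ι j => M.AB_disj _ j
                  total := ?_
                  A_adj := fun ι a ha w hw => M.A_adj _ a ha w hw
                  B_adj := fun j b hb u hu => M.B_adj j b hb u hu.1
                  no_other_edges := ?_
                  A_vd := fun ι => M.A_vd _
                  B_vd := M.B_vd }, rfl⟩
        · -- W_cover
          rintro x ⟨hx, hxv⟩
          obtain ⟨i, hi⟩ : ∃ i, x ∈ M.W i := by
            have := M.W_cover hx
            simpa using this
          have hii0 : i ≠ i0 := by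
            rintro rfl
            rw [hW0] at hi
            exact hxv hi
          obtain ⟨ι, rfl⟩ := Fin.exists_succAbove_eq hii0
          exact Set.mem_iUnion.2 ⟨ι, hi⟩
        · -- U_ne
          intro j
          by_cases hj : j = j0
          · subst hj
            obtain ⟨i, i', hne, hi, hi', h1, h2⟩ := hmulti
            obtain ⟨x, hx⟩ := M.W_ne i
            exact ⟨x, h1 hx, fun h => hWv i hi (Set.mem_singleton_iff.1 h ▸ hx)⟩
          · obtain ⟨x, hx⟩ := M.U_ne j
            exact ⟨x, hx, fun h => hUv j hj (Set.mem_singleton_iff.1 h ▸ hx)⟩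
        · -- U_cover
          rintro x ⟨hx, hxv⟩
          obtain ⟨j, hj⟩ : ∃ j, x ∈ M.U j := by
            have := M.U_cover hx
            simpa using this
          exact Set.mem_iUnion.2 ⟨j, hj, hxv⟩
        · -- W_in_U
          intro ι
          obtain ⟨j, hj⟩ := M.W_in_U (i0.succAbove ι)
          exact ⟨j, fun x hx => ⟨hj hx,
            fun h => hvW' ι (Set.mem_singleton_iff.1 h ▸ hx)⟩⟩
        · -- U_multi
          intro j
          by_cases hc : Fin.castLE M.hrs j = j0
          · obtain ⟨i, i', hne, hi, hi', h1, h2⟩ := hmulti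
            obtain ⟨ι, rfl⟩ := Fin.exists_succAbove_eq hi
            obtain ⟨ι', rfl⟩ := Fin.exists_succAbove_eq hi'
            refine ⟨ι, ι', fun h => hne (by rw [h]), ?_, ?_⟩
            · intro x hx
              refine ⟨?_, fun h => hvW' ι (Set.mem_singleton_iff.1 h ▸ hx)⟩
              rw [hc]
              exact h1 hx
            · intro x hx
              refine ⟨?_, fun h => hvW' ι' (Set.mem_singleton_iff.1 h ▸ hx)⟩
              rw [hc]
              exact h2 hx
          · obtain ⟨i, i', hne, h1, h2⟩ := M.U_multi j
            have hni0 : ∀ i'' : Fin (m+1), M.W i'' ⊆ M.U (Fin.castLE M.hrs j) → i'' ≠ i0 := by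
              intro i'' hsub h
              rw [h] at hsub
              exact hUv _ hc (hsub hvW)
            obtain ⟨ι, rfl⟩ := Fin.exists_succAbove_eq (hni0 i h1)
            obtain ⟨ι', rfl⟩ := Fin.exists_succAbove_eq (hni0 i' h2)
            refine ⟨ι, ι', fun h => hne (by rw [h]), ?_, ?_⟩
            · exact fun x hx => ⟨h1 hx, fun h => hvW' ι (Set.mem_singleton_iff.1 h ▸ hx)⟩
            · exact fun x hx => ⟨h2 hx, fun h => hvW' ι' (Set.mem_singleton_iff.1 h ▸ hx)⟩
        · -- U_single
          intro j hj
          have hjj0 : j ≠ j0 := by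
            intro h
            subst h
            omega
          obtain ⟨i, hUW⟩ := M.U_single j hj
          have hii0 : i ≠ i0 := by
            intro h
            rw [h] at hUW
            exact hUv j hjj0 (hUW ▸ hvW)
          obtain ⟨ι, rfl⟩ := Fin.exists_succAbove_eq hii0
          refine ⟨ι, ?_⟩
          show M.U j \ {v} = M.W (i0.succAbove ι)
          rw [hUW]
          exact Set.diff_singleton_eq_self (hvW' ι)
        · -- total
          ext x
          simp only [Set.mem_diff, Set.mem_union, Set.mem_univ, Set.mem_singleton_iff,
            true_and]
          constructor
          · rintro ⟨hxv, hxA⟩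
            rcases mem_total x with (hx | hx) | hx
            · exact Or.inl (Or.inl ⟨hx, hxv⟩)
            · obtain ⟨i, hi⟩ := Set.mem_iUnion.1 hx
              have hii0 : i ≠ i0 := by
                rintro rfl
                exact hxA hi
              obtain ⟨ι, rfl⟩ := Fin.exists_succAbove_eq hii0
              exact Or.inl (Or.inr (Set.mem_iUnion.2 ⟨ι, hi⟩))
            · exact Or.inr hx
          · rintro ((⟨hx, hxv⟩ | hx) | hx)
            · exact ⟨hxv, fun h => (M.A_disj_Vg i0).ne_of_mem h hx rfl⟩
            · obtain ⟨ι, hι⟩ := Set.mem_iUnion.1 hx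
              exact ⟨fun h => hvA _ (h ▸ hι),
                fun h => (M.A_disj _ i0 (hAne ι)).ne_of_mem hι h rfl⟩
            · obtain ⟨j, hj⟩ := Set.mem_iUnion.1 hx
              exact ⟨fun h => hvB j (h ▸ hj),
                fun h => (M.AB_disj i0 j).ne_of_mem h hj rfl⟩
        · -- no_other_edges
          intro x hx y hy hadj
          have hxv : x ≠ v := fun h => hx.1.2 (Set.mem_singleton_iff.2 h)
          have hyv : y ≠ v := fun h => hy.1.2 (Set.mem_singleton_iff.2 h)
          have hxA : x ∉ M.A i0 := hx.2
          have hyA : y ∉ M.A i0 := hy.2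
          rcases M.no_other_edges x trivial y trivial hadj with h | ⟨i, h⟩ | ⟨j, h⟩
          · exact Or.inl ⟨⟨h.1, hxv⟩, h.2, hyv⟩
          · rcases h with ⟨h1, h2⟩ | ⟨h1, h2⟩ | ⟨h1, h2⟩
            · have hii0 : i ≠ i0 := by
                rintro rfl
                exact hxA h1
              obtain ⟨ι, rfl⟩ := Fin.exists_succAbove_eq hii0
              exact Or.inr (Or.inl ⟨ι, Or.inl ⟨h1, h2⟩⟩)
            · have hii0 : i ≠ i0 := by
                rintro rfl
                exact hyA h1
              obtain ⟨ι, rfl⟩ := Fin.exists_succAbove_eq hii0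
              exact Or.inr (Or.inl ⟨ι, Or.inr (Or.inl ⟨h1, h2⟩)⟩)
            · have hii0 : i ≠ i0 := by
                rintro rfl
                exact hxA h1
              obtain ⟨ι, rfl⟩ := Fin.exists_succAbove_eq hii0
              exact Or.inr (Or.inl ⟨ι, Or.inr (Or.inr ⟨h1, h2⟩)⟩)
          · rcases h with ⟨h1, h2⟩ | ⟨h1, h2⟩ | ⟨h1, h2⟩
            · exact Or.inr (Or.inr ⟨j, Or.inl ⟨h1, h2, hyv⟩⟩)
            · exact Or.inr (Or.inr ⟨j, Or.inr (Or.inl ⟨h1, h2, hxv⟩)⟩)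
            · exact Or.inr (Or.inr ⟨j, Or.inr (Or.inr ⟨h1, h2⟩)⟩)
      · -- subcase 2c : cluster of v keeps exactly one clique; merge its B into that clique's A
        obtain ⟨ia, ib, hab, h1a, h2b⟩ := M.U_multi ⟨(j0:ℕ), hj0r⟩
        have hprj0 : Fin.castLE M.hrs (⟨(j0:ℕ), hj0r⟩ : Fin r) = j0 := Fin.ext rfl
        rw [hprj0] at h1a h2b
        obtain ⟨i1, hi1ne, hWi1⟩ : ∃ i1, i1 ≠ i0 ∧ M.W i1 ⊆ M.U j0 := by
          by_cases h : ia = i0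
          · exact ⟨ib, fun hb => hab (by rw [h, hb]), h2b⟩
          · exact ⟨ia, h, h1a⟩
        push_neg at hmulti
        have huniq : ∀ i, i ≠ i0 → M.W i ⊆ M.U j0 → i = i1 := by
          intro i hi hsub
          by_contra hne
          exact hmulti i i1 hne hi hi1ne hsub hWi1
        have hvW1 : v ∉ M.W i1 := hWv i1 hi1ne
        have hU1 : M.U j0 \ {v} = M.W i1 := by
          ext x
          constructor
          · rintro ⟨hx, hxv⟩
            obtain ⟨i, hxi, hisub⟩ := cover_decomp j0 x hx
            have hi : i ≠ i0 := by
              rintro rfl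
              rw [hW0] at hxi
              exact hxv hxi
            rw [huniq i hi hisub] at hxi
            exact hxi
          · intro hx
            exact ⟨hWi1 hx, fun h => hvW1 (Set.mem_singleton_iff.1 h ▸ hx)⟩
        obtain ⟨ι1, hι1⟩ := Fin.exists_succAbove_eq hi1ne
        have hr1s : r - 1 < s := by
          have := M.hrs
          omega
        have hrs2 : r - 1 ≤ s := le_of_lt hr1s
        have hswself : ∀ x : Fin s,
            Equiv.swap j0 ⟨r-1, hr1s⟩ (Equiv.swap j0 ⟨r-1, hr1s⟩ x) = x :=
          fun x => Equiv.swap_apply_self _ _ x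
        have hBlt : ∀ j1 : Fin (r-1),
            ((Equiv.swap j0 ⟨r-1, hr1s⟩ (Fin.castLE hrs2 j1)) : ℕ) < r := by
          intro j1
          have hj1 := j1.isLt
          have hne_q : Fin.castLE hrs2 j1 ≠ ⟨r-1, hr1s⟩ := by
            intro h
            rw [Fin.ext_iff] at h
            simp only [Fin.coe_castLE] at h
            omega
          by_cases h : Fin.castLE hrs2 j1 = j0
          · rw [h, Equiv.swap_apply_left]
            show r - 1 < r
            omega
          · rw [Equiv.swap_apply_of_ne_of_ne h hne_q]
            simp only [Fin.coe_castLE]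
            omega
        have hBnej0 : ∀ j1 : Fin (r-1),
            Equiv.swap j0 ⟨r-1, hr1s⟩ (Fin.castLE hrs2 j1) ≠ j0 := by
          intro j1 h
          have h2 := congrArg (Equiv.swap j0 ⟨r-1, hr1s⟩) h
          rw [hswself, Equiv.swap_apply_left] at h2
          have := j1.isLt
          rw [Fin.ext_iff] at h2
          simp only [Fin.coe_castLE] at h2
          omega
        have hfind : ∀ j : Fin r, j ≠ ⟨(j0:ℕ), hj0r⟩ → ∃ j1 : Fin (r-1),
            Fin.castLE hrs2 j1 = Equiv.swap j0 ⟨r-1, hr1s⟩ (Fin.castLE M.hrs j) := by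
          intro j hj
          have hxne : Fin.castLE M.hrs j ≠ j0 := by
            intro h
            apply hj
            rw [Fin.ext_iff] at h ⊢
            simpa using h
          have hlt : ((Equiv.swap j0 ⟨r-1, hr1s⟩ (Fin.castLE M.hrs j)) : ℕ) < r - 1 := by
            by_cases h2 : Fin.castLE M.hrs j = ⟨r-1, hr1s⟩
            · rw [h2, Equiv.swap_apply_right]
              have hjval : (j:ℕ) = r - 1 := by
                rw [Fin.ext_iff] at h2
                simpa using h2
              have hne : (j0:ℕ) ≠ r - 1 := by
                intro h
                apply hj
                rw [Fin.ext_iff]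
                simp [hjval, h]
              show (j0:ℕ) < r - 1
              omega
            · rw [Equiv.swap_apply_of_ne_of_ne hxne h2]
              have h3 : (j:ℕ) ≠ r - 1 := by
                intro h
                apply h2
                rw [Fin.ext_iff]
                simpa using h
              have := j.isLt
              simp only [Fin.coe_castLE]
              omega
          exact ⟨⟨_, hlt⟩, Fin.ext rfl⟩
        have hsubA : ∀ ι : Fin m, M.A (i0.succAbove ι) ⊆
            (if ι = ι1 then M.A i1 ∪ M.B ⟨(j0:ℕ), hj0r⟩ else M.A (i0.succAbove ι)) := by
          intro ι
          split_ifs with h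
          · subst h
            rw [hι1]
            exact Set.subset_union_left
          · exact subset_rfl
        have hsubB : M.B ⟨(j0:ℕ), hj0r⟩ ⊆
            (if ι1 = ι1 then M.A i1 ∪ M.B ⟨(j0:ℕ), hj0r⟩ else M.A (i0.succAbove ι1)) := by
          rw [if_pos rfl]
          exact Set.subset_union_right
        refine ⟨m, s, r - 1, M.A i0, hCsub, M.A_vd i0, hCedge, ?_⟩
        refine ⟨{ hrs := hrs2
                  Vg := M.Vg \ {v}
                  W := fun ι => M.W (i0.succAbove ι)
                  U := fun k => M.U (Equiv.swap j0 ⟨r-1, hr1s⟩ k) \ {v}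
                  W_ne := fun ι => M.W_ne _
                  W_sub := fun ι x hx => ⟨M.W_sub _ hx,
                    fun h => hvW' ι (Set.mem_singleton_iff.1 h ▸ hx)⟩
                  W_disj := fun ι ι' h =>
                    M.W_disj _ _ (fun he => h (Fin.succAbove_right_injective he))
                  W_cover := ?_
                  W_clique := fun ι x hx y hy => M.W_clique _ x hx y hy
                  U_ne := ?_
                  U_sub := fun k => Set.diff_subset_diff_left (M.U_sub _)
                  U_disj := fun k k' h =>
                    (M.U_disj _ _ (fun he => h ((Equiv.swap j0 ⟨r-1, hr1s⟩).injective he))).mono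
                      Set.diff_subset Set.diff_subset
                  U_cover := ?_
                  W_in_U := ?_
                  cluster_indep := fun ι ι' hne k h1 h2 =>
                    M.cluster_indep _ _ (fun he => hne (Fin.succAbove_right_injective he)) _
                      (fun x hx => (h1 hx).1) (fun x hx => (h2 hx).1)
                  U_multi := ?_
                  U_single := ?_
                  A := fun ι => if ι = ι1 then M.A i1 ∪ M.B ⟨(j0:ℕ), hj0r⟩
                    else M.A (i0.succAbove ι)
                  B := fun j1 => M.B ⟨_, hBlt j1⟩
                  A_ne := ?_
                  B_ne := fun j1 => M.B_ne _
                  A_disj_Vg := ?_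
                  B_disj_Vg := fun j1 => (M.B_disj_Vg _).mono_right Set.diff_subset
                  A_disj := ?_
                  B_disj := ?_
                  AB_disj := ?_
                  total := ?_
                  A_adj := ?_
                  B_adj := ?_
                  no_other_edges := ?_
                  A_vd := ?_
                  B_vd := fun j1 => M.B_vd _ }, rfl⟩
        · -- W_cover
          rintro x ⟨hx, hxv⟩
          obtain ⟨i, hi⟩ : ∃ i, x ∈ M.W i := by
            have := M.W_cover hx
            simpa using this
          have hii0 : i ≠ i0 := by
            rintro rfl
            rw [hW0] at hi
            exact hxv hi
          obtain ⟨ι, rfl⟩ := Fin.exists_succAbove_eq hii0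
          exact Set.mem_iUnion.2 ⟨ι, hi⟩
        · -- U_ne
          intro k
          by_cases h : Equiv.swap j0 ⟨r-1, hr1s⟩ k = j0
          · rw [h, hU1]
            exact M.W_ne i1
          · obtain ⟨x, hx⟩ := M.U_ne (Equiv.swap j0 ⟨r-1, hr1s⟩ k)
            exact ⟨x, hx, fun hh => hUv _ h (Set.mem_singleton_iff.1 hh ▸ hx)⟩
        · -- U_cover
          rintro x ⟨hx, hxv⟩
          obtain ⟨j, hj⟩ : ∃ j, x ∈ M.U j := by
            have := M.U_cover hx
            simpa using this
          refine Set.mem_iUnion.2 ⟨Equiv.swap j0 ⟨r-1, hr1s⟩ j, ?_⟩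
          show x ∈ M.U (Equiv.swap j0 ⟨r-1, hr1s⟩ (Equiv.swap j0 ⟨r-1, hr1s⟩ j)) \ {v}
          rw [hswself]
          exact ⟨hj, hxv⟩
        · -- W_in_U
          intro ι
          obtain ⟨j, hj⟩ := M.W_in_U (i0.succAbove ι)
          refine ⟨Equiv.swap j0 ⟨r-1, hr1s⟩ j, ?_⟩
          show M.W (i0.succAbove ι) ⊆
            M.U (Equiv.swap j0 ⟨r-1, hr1s⟩ (Equiv.swap j0 ⟨r-1, hr1s⟩ j)) \ {v}
          rw [hswself]
          exact fun x hx => ⟨hj hx, fun h => hvW' ι (Set.mem_singleton_iff.1 h ▸ hx)⟩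
        · -- U_multi
          intro j1
          have hcasteq : Fin.castLE M.hrs (⟨_, hBlt j1⟩ : Fin r)
              = Equiv.swap j0 ⟨r-1, hr1s⟩ (Fin.castLE hrs2 j1) := Fin.ext rfl
          obtain ⟨i, i', hne, h1, h2⟩ := M.U_multi ⟨_, hBlt j1⟩
          rw [hcasteq] at h1 h2
          have hni0 : ∀ i'' : Fin (m+1),
              M.W i'' ⊆ M.U (Equiv.swap j0 ⟨r-1, hr1s⟩ (Fin.castLE hrs2 j1)) → i'' ≠ i0 := by
            intro i'' hsub h
            rw [h] at hsub
            exact hUv _ (hBnej0 j1) (hsub hvW)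
          obtain ⟨ι, rfl⟩ := Fin.exists_succAbove_eq (hni0 i h1)
          obtain ⟨ι', rfl⟩ := Fin.exists_succAbove_eq (hni0 i' h2)
          refine ⟨ι, ι', fun h => hne (by rw [h]), ?_, ?_⟩
          · exact fun x hx => ⟨h1 hx, fun h => hvW' ι (Set.mem_singleton_iff.1 h ▸ hx)⟩
          · exact fun x hx => ⟨h2 hx, fun h => hvW' ι' (Set.mem_singleton_iff.1 h ▸ hx)⟩
        · -- U_single
          intro k hk
          by_cases hkq : k = ⟨r-1, hr1s⟩
          · refine ⟨ι1, ?_⟩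
            show M.U (Equiv.swap j0 ⟨r-1, hr1s⟩ k) \ {v} = M.W (i0.succAbove ι1)
            rw [hkq, Equiv.swap_apply_right, hU1, hι1]
          · have hkj0 : k ≠ j0 := by
              intro h
              have hv1 : (k:ℕ) = (j0:ℕ) := by rw [h]
              exact hkq (Fin.ext (show (k:ℕ) = r - 1 by omega))
            have hkr : r ≤ (k:ℕ) := by
              have h3 : (k:ℕ) ≠ r - 1 :=
                fun h => hkq (Fin.ext (show (k:ℕ) = r - 1 from h))
              omega
            obtain ⟨i, hUW⟩ := M.U_single k hkr
            have hii0 : i ≠ i0 := by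
              intro h
              rw [h] at hUW
              exact hUv k hkj0 (hUW ▸ hvW)
            obtain ⟨ι, rfl⟩ := Fin.exists_succAbove_eq hii0
            refine ⟨ι, ?_⟩
            show M.U (Equiv.swap j0 ⟨r-1, hr1s⟩ k) \ {v} = M.W (i0.succAbove ι)
            rw [Equiv.swap_apply_of_ne_of_ne hkj0 hkq, hUW]
            exact Set.diff_singleton_eq_self (hvW' ι)
        · -- A_ne
          intro ι
          split_ifs with h
          · exact Set.Nonempty.mono Set.subset_union_left (M.A_ne i1)
          · exact M.A_ne _
        · -- A_disj_Vg
          intro ι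
          split_ifs with h
          · exact Set.disjoint_union_left.2
              ⟨(M.A_disj_Vg i1).mono_right Set.diff_subset,
               (M.B_disj_Vg _).mono_right Set.diff_subset⟩
          · exact (M.A_disj_Vg _).mono_right Set.diff_subset
        · -- A_disj
          intro ι ι' h
          split_ifs with h1 h2 h2
          · exact absurd (h1.trans h2.symm) h
          · refine Set.disjoint_union_left.2 ⟨?_, (M.AB_disj (i0.succAbove ι') _).symm⟩
            refine M.A_disj i1 _ ?_
            intro he
            exact h2 (Fin.succAbove_right_injective (hι1.trans he)).symm
          · refine Set.disjoint_union_right.2 ⟨?_, M.AB_disj (i0.succAbove ι) _⟩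
            refine M.A_disj _ i1 ?_
            intro he
            exact h1 (Fin.succAbove_right_injective (hι1.trans he.symm)).symm
          · exact M.A_disj _ _ (fun he => h (Fin.succAbove_right_injective he))
        · -- B_disj
          intro j1 j1' h
          refine M.B_disj _ _ ?_
          intro he
          apply h
          have h2 : Equiv.swap j0 ⟨r-1, hr1s⟩ (Fin.castLE hrs2 j1)
              = Equiv.swap j0 ⟨r-1, hr1s⟩ (Fin.castLE hrs2 j1') := by
            rw [Fin.ext_iff] at he
            exact Fin.ext he
          have h3 := (Equiv.swap j0 ⟨r-1, hr1s⟩).injective h2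
          rw [Fin.ext_iff] at h3 ⊢
          simpa using h3
        · -- AB_disj
          intro ι j1
          split_ifs with h
          · refine Set.disjoint_union_left.2 ⟨M.AB_disj i1 _, M.B_disj _ _ ?_⟩
            intro he
            apply hBnej0 j1
            apply Fin.ext
            rw [Fin.ext_iff] at he
            exact he.symm
          · exact M.AB_disj _ _
        · -- total
          ext x
          simp only [Set.mem_diff, Set.mem_union, Set.mem_univ, Set.mem_singleton_iff,
            true_and]
          constructor
          · rintro ⟨hxv, hxA⟩
            rcases mem_total x with (hx | hx) | hx
            · exact Or.inl (Or.inl ⟨hx, hxv⟩)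
            · obtain ⟨i, hi⟩ := Set.mem_iUnion.1 hx
              have hii0 : i ≠ i0 := by
                rintro rfl
                exact hxA hi
              obtain ⟨ι, rfl⟩ := Fin.exists_succAbove_eq hii0
              exact Or.inl (Or.inr (Set.mem_iUnion.2 ⟨ι, hsubA ι hi⟩))
            · obtain ⟨j, hj⟩ := Set.mem_iUnion.1 hx
              by_cases hjpr : j = ⟨(j0:ℕ), hj0r⟩
              · subst hjpr
                exact Or.inl (Or.inr (Set.mem_iUnion.2 ⟨ι1, hsubB hj⟩))
              · obtain ⟨j1, hfj⟩ := hfind j hjpr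
                refine Or.inr (Set.mem_iUnion.2 ⟨j1, ?_⟩)
                show x ∈ M.B ⟨((Equiv.swap j0 ⟨r-1, hr1s⟩ (Fin.castLE hrs2 j1)) : ℕ), hBlt j1⟩
                have hjeq : (⟨((Equiv.swap j0 ⟨r-1, hr1s⟩ (Fin.castLE hrs2 j1)) : ℕ),
                    hBlt j1⟩ : Fin r) = j := by
                  apply Fin.ext
                  show ((Equiv.swap j0 ⟨r-1, hr1s⟩ (Fin.castLE hrs2 j1)) : ℕ) = (j:ℕ)
                  rw [hfj, hswself]
                  simp
                rw [hjeq]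
                exact hj
          · rintro ((⟨hx, hxv⟩ | hx) | hx)
            · exact ⟨hxv, fun h => (M.A_disj_Vg i0).ne_of_mem h hx rfl⟩
            · obtain ⟨ι, hι⟩ := Set.mem_iUnion.1 hx
              split_ifs at hι with h
              · rcases hι with hι | hι
                · exact ⟨fun hh => hvA i1 (hh ▸ hι),
                    fun hh => (M.A_disj i1 i0 hi1ne).ne_of_mem hι hh rfl⟩
                · exact ⟨fun hh => hvB _ (hh ▸ hι),
                    fun hh => (M.AB_disj i0 _).ne_of_mem hh hι rfl⟩
              · exact ⟨fun hh => hvA _ (hh ▸ hι),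
                  fun hh => (M.A_disj _ i0 (hAne ι)).ne_of_mem hι hh rfl⟩
            · obtain ⟨j1, hj⟩ := Set.mem_iUnion.1 hx
              exact ⟨fun hh => hvB _ (hh ▸ hj),
                fun hh => (M.AB_disj i0 _).ne_of_mem hh hj rfl⟩
        · -- A_adj
          intro ι a ha w hw
          split_ifs at ha with h
          · subst h
            rw [hι1] at hw
            rcases ha with ha | ha
            · exact M.A_adj i1 a ha w hw
            · refine M.B_adj ⟨(j0:ℕ), hj0r⟩ a ha w ?_
              rw [hprj0]
              exact hWi1 hw
          · exact M.A_adj _ a ha w hw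
        · -- B_adj
          intro j1 b hb u hu
          refine M.B_adj ⟨_, hBlt j1⟩ b hb u ?_
          have hcasteq : Fin.castLE M.hrs (⟨_, hBlt j1⟩ : Fin r)
              = Equiv.swap j0 ⟨r-1, hr1s⟩ (Fin.castLE hrs2 j1) := Fin.ext rfl
          rw [hcasteq]
          exact hu.1
        · -- no_other_edges
          intro x hx y hy hadj
          have hxv : x ≠ v := fun h => hx.1.2 (Set.mem_singleton_iff.2 h)
          have hyv : y ≠ v := fun h => hy.1.2 (Set.mem_singleton_iff.2 h)
          have hxA : x ∉ M.A i0 := hx.2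
          have hyA : y ∉ M.A i0 := hy.2
          rcases M.no_other_edges x trivial y trivial hadj with h | ⟨i, h⟩ | ⟨j, h⟩
          · exact Or.inl ⟨⟨h.1, hxv⟩, h.2, hyv⟩
          · rcases h with ⟨h1, h2⟩ | ⟨h1, h2⟩ | ⟨h1, h2⟩
            · have hii0 : i ≠ i0 := by
                rintro rfl
                exact hxA h1
              obtain ⟨ι, rfl⟩ := Fin.exists_succAbove_eq hii0
              exact Or.inr (Or.inl ⟨ι, Or.inl ⟨hsubA ι h1, h2⟩⟩)
            · have hii0 : i ≠ i0 := by
                rintro rfl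
                exact hyA h1
              obtain ⟨ι, rfl⟩ := Fin.exists_succAbove_eq hii0
              exact Or.inr (Or.inl ⟨ι, Or.inr (Or.inl ⟨hsubA ι h1, h2⟩)⟩)
            · have hii0 : i ≠ i0 := by
                rintro rfl
                exact hxA h1
              obtain ⟨ι, rfl⟩ := Fin.exists_succAbove_eq hii0
              exact Or.inr (Or.inl ⟨ι, Or.inr (Or.inr ⟨hsubA ι h1, hsubA ι h2⟩)⟩)
          · by_cases hjpr : j = ⟨(j0:ℕ), hj0r⟩
            · subst hjpr
              rw [hprj0] at h
              rcases h with ⟨h1, h2⟩ | ⟨h1, h2⟩ | ⟨h1, h2⟩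
              · refine Or.inr (Or.inl ⟨ι1, Or.inl ⟨hsubB h1, ?_⟩⟩)
                show y ∈ M.W (i0.succAbove ι1)
                rw [hι1, ← hU1]
                exact ⟨h2, fun hh => hyv (Set.mem_singleton_iff.1 hh)⟩
              · refine Or.inr (Or.inl ⟨ι1, Or.inr (Or.inl ⟨hsubB h1, ?_⟩)⟩)
                show x ∈ M.W (i0.succAbove ι1)
                rw [hι1, ← hU1]
                exact ⟨h2, fun hh => hxv (Set.mem_singleton_iff.1 hh)⟩
              · exact Or.inr (Or.inl ⟨ι1, Or.inr (Or.inr ⟨hsubB h1, hsubB h2⟩)⟩)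
            · obtain ⟨j1, hfj⟩ := hfind j hjpr
              have hjeq : (⟨((Equiv.swap j0 ⟨r-1, hr1s⟩ (Fin.castLE hrs2 j1)) : ℕ),
                  hBlt j1⟩ : Fin r) = j := by
                apply Fin.ext
                show ((Equiv.swap j0 ⟨r-1, hr1s⟩ (Fin.castLE hrs2 j1)) : ℕ) = (j:ℕ)
                rw [hfj, hswself]
                simp
              have hueq : Equiv.swap j0 ⟨r-1, hr1s⟩ (Fin.castLE hrs2 j1)
                  = Fin.castLE M.hrs j := by
                rw [hfj, hswself]
              rcases h with ⟨h1, h2⟩ | ⟨h1, h2⟩ | ⟨h1, h2⟩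
              · refine Or.inr (Or.inr ⟨j1, Or.inl ⟨?_, ?_⟩⟩)
                · show x ∈ M.B ⟨((Equiv.swap j0 ⟨r-1, hr1s⟩ (Fin.castLE hrs2 j1)) : ℕ), hBlt j1⟩
                  rw [hjeq]
                  exact h1
                · show y ∈ M.U (Equiv.swap j0 ⟨r-1, hr1s⟩ (Fin.castLE hrs2 j1)) \ {v}
                  rw [hueq]
                  exact ⟨h2, fun hh => hyv (Set.mem_singleton_iff.1 hh)⟩
              · refine Or.inr (Or.inr ⟨j1, Or.inr (Or.inl ⟨?_, ?_⟩)⟩)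
                · show y ∈ M.B ⟨((Equiv.swap j0 ⟨r-1, hr1s⟩ (Fin.castLE hrs2 j1)) : ℕ), hBlt j1⟩
                  rw [hjeq]
                  exact h1
                · show x ∈ M.U (Equiv.swap j0 ⟨r-1, hr1s⟩ (Fin.castLE hrs2 j1)) \ {v}
                  rw [hueq]
                  exact ⟨h2, fun hh => hxv (Set.mem_singleton_iff.1 hh)⟩
              · refine Or.inr (Or.inr ⟨j1, Or.inr (Or.inr ⟨?_, ?_⟩)⟩)
                · show x ∈ M.B ⟨((Equiv.swap j0 ⟨r-1, hr1s⟩ (Fin.castLE hrs2 j1)) : ℕ), hBlt j1⟩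
                  rw [hjeq]
                  exact h1
                · show y ∈ M.B ⟨((Equiv.swap j0 ⟨r-1, hr1s⟩ (Fin.castLE hrs2 j1)) : ℕ), hBlt j1⟩
                  rw [hjeq]
                  exact h2
        · -- A_vd
          intro ι
          split_ifs with h
          · refine VD_union H (M.A_vd i1) (M.B_vd ⟨(j0:ℕ), hj0r⟩)
              (M.AB_disj i1 ⟨(j0:ℕ), hj0r⟩) ?_
            intro x hxa y hyb hadj
            rcases M.no_other_edges x trivial y trivial hadj with hh | ⟨i, hh⟩ | ⟨j, hh⟩
            · exact (M.A_disj_Vg i1).ne_of_mem hxa hh.1 rfl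
            · rcases hh with ⟨hh1, hh2⟩ | ⟨hh1, hh2⟩ | ⟨hh1, hh2⟩
              · exact (M.B_disj_Vg _).ne_of_mem hyb (M.W_sub _ hh2) rfl
              · exact (M.A_disj_Vg i1).ne_of_mem hxa (M.W_sub _ hh2) rfl
              · exact (M.AB_disj i _).ne_of_mem hh2 hyb rfl
            · rcases hh with ⟨hh1, hh2⟩ | ⟨hh1, hh2⟩ | ⟨hh1, hh2⟩
              · exact (M.AB_disj i1 j).ne_of_mem hxa hh1 rfl
              · exact (M.A_disj_Vg i1).ne_of_mem hxa (M.U_sub _ hh2) rfl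
              · exact (M.AB_disj i1 j).ne_of_mem hxa hh1 rfl
          · exact M.A_vd _
    · -- subcase 2a : the cluster of v is the singleton {v}
      push_neg at hj0r
      obtain ⟨n, rfl⟩ : ∃ n, s = n + 1 := ⟨s - 1, by have := j0.isLt; omega⟩
      have hU0 : M.U j0 = {v} := by
        obtain ⟨i, hUW⟩ := M.U_single j0 hj0r
        have hi : i = i0 := by
          by_contra hne
          exact hWv i hne (hUW ▸ hvU)
        subst hi
        rw [hUW, hW0]
      have hrs' : r ≤ n := by
        have := j0.isLt
        omega
      have hBne : ∀ k : Fin n, j0.succAbove k ≠ j0 := fun k => Fin.succAbove_ne j0 k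
      have hvU' : ∀ k : Fin n, v ∉ M.U (j0.succAbove k) := fun k => hUv _ (hBne k)
      have hcast : ∀ j : Fin r, j0.succAbove (Fin.castLE hrs' j) = Fin.castLE M.hrs j := by
        intro j
        apply Fin.ext
        rw [succAbove_val]
        have hjr := j.isLt
        simp only [Fin.coe_castLE]
        split <;> omega
      have hge : ∀ k : Fin n, (k : ℕ) ≤ ((j0.succAbove k) : ℕ) := by
        intro k
        rw [succAbove_val]
        split <;> omega
      refine ⟨m, n, r, M.A i0, hCsub, M.A_vd i0, hCedge, ?_⟩
      refine ⟨{ hrs := hrs'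
                Vg := M.Vg \ {v}
                W := fun ι => M.W (i0.succAbove ι)
                U := fun k => M.U (j0.succAbove k)
                W_ne := fun ι => M.W_ne _
                W_sub := fun ι x hx => ⟨M.W_sub _ hx,
                  fun h => hvW' ι (Set.mem_singleton_iff.1 h ▸ hx)⟩
                W_disj := fun ι ι' h =>
                  M.W_disj _ _ (fun he => h (Fin.succAbove_right_injective he))
                W_cover := ?_
                W_clique := fun ι x hx y hy => M.W_clique _ x hx y hy
                U_ne := fun k => M.U_ne _
                U_sub := fun k x hx => ⟨M.U_sub _ hx,
                  fun h => hvU' k (Set.mem_singleton_iff.1 h ▸ hx)⟩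
                U_disj := fun k k' h =>
                  M.U_disj _ _ (fun he => h (Fin.succAbove_right_injective he))
                U_cover := ?_
                W_in_U := ?_
                cluster_indep := fun ι ι' hne k h1 h2 =>
                  M.cluster_indep _ _ (fun he => hne (Fin.succAbove_right_injective he)) _ h1 h2
                U_multi := ?_
                U_single := ?_
                A := fun ι => M.A (i0.succAbove ι)
                B := M.B
                A_ne := fun ι => M.A_ne _
                B_ne := M.B_ne
                A_disj_Vg := fun ι => (M.A_disj_Vg _).mono_right Set.diff_subset
                B_disj_Vg := fun j => (M.B_disj_Vg j).mono_right Set.diff_subset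
                A_disj := fun ι ι' h =>
                  M.A_disj _ _ (fun he => h (Fin.succAbove_right_injective he))
                B_disj := M.B_disj
                AB_disj := fun ι j => M.AB_disj _ j
                total := ?_
                A_adj := fun ι a ha w hw => M.A_adj _ a ha w hw
                B_adj := ?_
                no_other_edges := ?_
                A_vd := fun ι => M.A_vd _
                B_vd := M.B_vd }, rfl⟩
      · -- W_cover
        rintro x ⟨hx, hxv⟩
        obtain ⟨i, hi⟩ : ∃ i, x ∈ M.W i := by
          have := M.W_cover hx
          simpa using this
        have hii0 : i ≠ i0 := by
          rintro rfl
          rw [hW0] at hi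
          exact hxv hi
        obtain ⟨ι, hι⟩ := Fin.exists_succAbove_eq hii0
        exact Set.mem_iUnion.2 ⟨ι, hι ▸ hi⟩
      · -- U_cover
        rintro x ⟨hx, hxv⟩
        obtain ⟨j, hj⟩ : ∃ j, x ∈ M.U j := by
          have := M.U_cover hx
          simpa using this
        have hjj0 : j ≠ j0 := by
          rintro rfl
          rw [hU0] at hj
          exact hxv hj
        obtain ⟨k, hk⟩ := Fin.exists_succAbove_eq hjj0
        exact Set.mem_iUnion.2 ⟨k, hk ▸ hj⟩
      · -- W_in_U
        intro ι
        obtain ⟨j, hj⟩ := M.W_in_U (i0.succAbove ι)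
        have hjj0 : j ≠ j0 := by
          rintro rfl
          obtain ⟨x, hx⟩ := M.W_ne (i0.succAbove ι)
          have := hj hx
          rw [hU0] at this
          exact hvW' ι (Set.mem_singleton_iff.1 this ▸ hx)
        obtain ⟨k, rfl⟩ := Fin.exists_succAbove_eq hjj0
        exact ⟨k, hj⟩
      · -- U_multi
        intro j
        have heq : j0.succAbove (Fin.castLE hrs' j) = Fin.castLE M.hrs j := hcast j
        obtain ⟨i, i', hne, h1, h2⟩ := M.U_multi j
        have hj0ne : Fin.castLE M.hrs j ≠ j0 := by
          intro h
          have := j.isLt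
          rw [Fin.ext_iff] at h
          simp only [Fin.coe_castLE] at h
          omega
        have hni0 : ∀ i'' : Fin (m+1), M.W i'' ⊆ M.U (Fin.castLE M.hrs j) → i'' ≠ i0 := by
          intro i'' hsub h
          rw [h] at hsub
          exact hUv _ hj0ne (hsub hvW)
        obtain ⟨ι, hι⟩ := Fin.exists_succAbove_eq (hni0 i h1)
        obtain ⟨ι', hι'⟩ := Fin.exists_succAbove_eq (hni0 i' h2)
        refine ⟨ι, ι', fun h => hne (by rw [← hι, ← hι', h]), ?_, ?_⟩
        · rw [heq, hι]
          exact h1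
        · rw [heq, hι']
          exact h2
      · -- U_single
        intro k hk
        have hge' : r ≤ ((j0.succAbove k) : ℕ) := le_trans hk (hge k)
        obtain ⟨i, hUW⟩ := M.U_single _ hge'
        have hii0 : i ≠ i0 := by
          intro h
          rw [h] at hUW
          exact hvU' k (hUW ▸ hvW)
        obtain ⟨ι, hι⟩ := Fin.exists_succAbove_eq hii0
        exact ⟨ι, by rw [hUW, hι]⟩
      · -- total
        ext x
        simp only [Set.mem_diff, Set.mem_union, Set.mem_univ, Set.mem_singleton_iff,
          true_and]
        constructor
        · rintro ⟨hxv, hxA⟩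
          rcases mem_total x with (hx | hx) | hx
          · exact Or.inl (Or.inl ⟨hx, hxv⟩)
          · obtain ⟨i, hi⟩ := Set.mem_iUnion.1 hx
            have hii0 : i ≠ i0 := by
              rintro rfl
              exact hxA hi
            obtain ⟨ι, hι⟩ := Fin.exists_succAbove_eq hii0
            exact Or.inl (Or.inr (Set.mem_iUnion.2 ⟨ι, hι ▸ hi⟩))
          · exact Or.inr hx
        · rintro ((⟨hx, hxv⟩ | hx) | hx)
          · exact ⟨hxv, fun h => (M.A_disj_Vg i0).ne_of_mem h hx rfl⟩
          · obtain ⟨ι, hι⟩ := Set.mem_iUnion.1 hx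
            exact ⟨fun h => hvA _ (h ▸ hι),
              fun h => (M.A_disj _ i0 (hAne ι)).ne_of_mem hι h rfl⟩
          · obtain ⟨j, hj⟩ := Set.mem_iUnion.1 hx
            exact ⟨fun h => hvB j (h ▸ hj),
              fun h => (M.AB_disj i0 j).ne_of_mem h hj rfl⟩
      · -- B_adj
        intro j b hb u hu
        apply M.B_adj j b hb
        rw [← hcast j]
        exact hu
      · -- no_other_edges
        intro x hx y hy hadj
        have hxv : x ≠ v := fun h => hx.1.2 (Set.mem_singleton_iff.2 h)
        have hyv : y ≠ v := fun h => hy.1.2 (Set.mem_singleton_iff.2 h)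
        have hxA : x ∉ M.A i0 := hx.2
        have hyA : y ∉ M.A i0 := hy.2
        rcases M.no_other_edges x trivial y trivial hadj with h | ⟨i, h⟩ | ⟨j, h⟩
        · exact Or.inl ⟨⟨h.1, hxv⟩, h.2, hyv⟩
        · rcases h with ⟨h1, h2⟩ | ⟨h1, h2⟩ | ⟨h1, h2⟩
          · have hii0 : i ≠ i0 := by
              rintro rfl
              exact hxA h1
            obtain ⟨ι, rfl⟩ := Fin.exists_succAbove_eq hii0
            exact Or.inr (Or.inl ⟨ι, Or.inl ⟨h1, h2⟩⟩)
          · have hii0 : i ≠ i0 := by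
              rintro rfl
              exact hyA h1
            obtain ⟨ι, rfl⟩ := Fin.exists_succAbove_eq hii0
            exact Or.inr (Or.inl ⟨ι, Or.inr (Or.inl ⟨h1, h2⟩)⟩)
          · have hii0 : i ≠ i0 := by
              rintro rfl
              exact hxA h1
            obtain ⟨ι, rfl⟩ := Fin.exists_succAbove_eq hii0
            exact Or.inr (Or.inl ⟨ι, Or.inr (Or.inr ⟨h1, h2⟩)⟩)
        · rcases h with ⟨h1, h2⟩ | ⟨h1, h2⟩ | ⟨h1, h2⟩
          · refine Or.inr (Or.inr ⟨j, Or.inl ⟨h1, ?_⟩⟩)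
            show y ∈ M.U (j0.succAbove (Fin.castLE hrs' j))
            rw [hcast j]
            exact h2
          · refine Or.inr (Or.inr ⟨j, Or.inr (Or.inl ⟨h1, ?_⟩)⟩)
            show x ∈ M.U (j0.succAbove (Fin.castLE hrs' j))
            rw [hcast j]
            exact h2
          · exact Or.inr (Or.inr ⟨j, Or.inr (Or.inr ⟨h1, h2⟩)⟩)

end Paper
end

section
/- Let G be a finite simple graph with vertex clique-partition π = {W_1,…,W_d}, let G^π be the clique-whiskered graph with added vertex set W = {s_1',…,s_d'}. If F_1 and F_2 are maximal independent vertex sets of G^π with F_1 \ W = F_2 \ W, then F_1 = F_2. Consequently the relation F_1 ≤ F_2 ⇔ F_1 \ W ⊆ F_2 \ W is a partial order on the set of maximal independent vertex sets of G^π, with least element W. -/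
namespace Paper

variable {V : Type*}

/-- The data exhibiting the graph `H` (on its full vertex type) as the
clique-whiskered graph `G^π` over the base graph `G` (the induced subgraph of `H` on
`Vg`), built from a vertex clique-partition `π = {W_1, …, W_d}` of `G` by adding `d`
new vertices `s_1', …, s_d'`, where `s_i'` is adjacent exactly to the vertices of
`W i`.  The set of added vertices is `W = Set.range sV`. -/
structure CliqueWhiskered (H : SimpleGraph V) (d : ℕ) where
  /-- the vertex set of the base graph `G`; the edges of `G` are the edges of `H`
  between vertices of `Vg`, i.e. `G` is the induced subgraph of `H` on `Vg`. -/
  Vg : Set V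
  /-- the vertex clique-partition `π = {W_1, …, W_d}` of `G` -/
  W : Fin d → Set V
  /-- the added whisker vertices `s_1', …, s_d'` -/
  sV : Fin d → V
  W_ne : ∀ i, (W i).Nonempty
  W_sub : ∀ i, W i ⊆ Vg
  W_disj : ∀ i j, i ≠ j → Disjoint (W i) (W j)
  W_cover : Vg ⊆ ⋃ i, W i
  W_clique : ∀ i, ∀ x ∈ W i, ∀ y ∈ W i, x ≠ y → H.Adj x y
  s_notin : ∀ i, sV i ∉ Vg
  s_inj : Function.Injective sV
  /-- the vertex set of `G^π` is `V(G)` together with the new vertices -/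
  total : Set.univ = Vg ∪ Set.range sV
  /-- `s_i'` is adjacent exactly to the vertices of `W i` -/
  s_adj : ∀ i, ∀ w : V, H.Adj (sV i) w ↔ w ∈ W i

/-- **Theorem.** If `F₁`, `F₂` are maximal independent vertex sets of `G^π` with
`F₁ \ W = F₂ \ W`, then `F₁ = F₂`.  Consequently `F₁ ≤ F₂ ⇔ F₁ \ W ⊆ F₂ \ W` is a
partial order on the maximal independent vertex sets of `G^π` with least element `W`:
`W` is a maximal independent vertex set and `W \ W ⊆ F \ W` for every maximal
independent vertex set `F`. -/
theorem cliqueWhiskered_partialOrder [Fintype V]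
    (H : SimpleGraph V) (d : ℕ) (M : CliqueWhiskered H d) :
    (∀ F₁ F₂ : Set V, MaxIndep H F₁ → MaxIndep H F₂ →
      F₁ \ Set.range M.sV = F₂ \ Set.range M.sV → F₁ = F₂) ∧
    MaxIndep H (Set.range M.sV) ∧
    (∀ F : Set V, MaxIndep H F →
      Set.range M.sV \ Set.range M.sV ⊆ F \ Set.range M.sV) := by
  -- maximality gives an adjacent witness for any vertex outside
  have hmaxadj : ∀ F : Set V, MaxIndep H F → ∀ x ∉ F, ∃ y ∈ F, H.Adj x y := by
    intro F hF x hx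
    by_contra h
    push_neg at h
    have hind : IndepOn H (insert x F) := by
      intro a ha b hb hab
      rcases ha with rfl | ha
      · rcases hb with rfl | hb
        · exact H.irrefl hab
        · exact h b hb hab
      · rcases hb with rfl | hb
        · exact h a ha hab.symm
        · exact hF.1 a ha b hb hab
    have := hF.2 _ hind (Set.subset_insert x F)
    exact hx (this ▸ Set.mem_insert x F)
  have hnotinW : ∀ i, M.sV i ∉ M.Vg := M.s_notin
  have hrange_notVg : ∀ y ∈ M.Vg, y ∉ Set.range M.sV := by
    rintro y hy ⟨j, rfl⟩; exact M.s_notin j hy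
  -- key: sV i ∈ F determined by F \ range sV
  have key : ∀ F₁ F₂ : Set V, MaxIndep H F₁ → MaxIndep H F₂ →
      F₁ \ Set.range M.sV = F₂ \ Set.range M.sV →
      ∀ i, M.sV i ∈ F₁ → M.sV i ∈ F₂ := by
    intro F₁ F₂ h₁ h₂ heq i hi
    by_contra hni
    obtain ⟨y, hyF₂, hadj⟩ := hmaxadj F₂ h₂ _ hni
    have hyW : y ∈ M.W i := (M.s_adj i y).1 hadj
    have hyVg : y ∈ M.Vg := M.W_sub i hyW
    have : y ∈ F₂ \ Set.range M.sV := ⟨hyF₂, hrange_notVg y hyVg⟩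
    rw [← heq] at this
    exact h₁.1 _ hi y this.1 hadj
  refine ⟨?_, ⟨?_, ?_⟩, ?_⟩
  · intro F₁ F₂ h₁ h₂ heq
    ext x
    by_cases hx : x ∈ Set.range M.sV
    · obtain ⟨i, rfl⟩ := hx
      exact ⟨key F₁ F₂ h₁ h₂ heq i, key F₂ F₁ h₂ h₁ heq.symm i⟩
    · constructor
      · intro h; exact ((Set.ext_iff.mp heq x).1 ⟨h, hx⟩).1
      · intro h; exact ((Set.ext_iff.mp heq x).2 ⟨h, hx⟩).1
  · rintro x ⟨i, rfl⟩ y ⟨j, rfl⟩ hadj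
    exact M.s_notin j (M.W_sub i ((M.s_adj i _).1 hadj))
  · intro T hT hsub
    apply Set.Subset.antisymm _ hsub
    intro x hx
    by_contra hxr
    have hxVg : x ∈ M.Vg := by
      have : x ∈ M.Vg ∪ Set.range M.sV := M.total ▸ Set.mem_univ x
      exact this.resolve_right hxr
    obtain ⟨Wi, ⟨i, rfl⟩, hxW⟩ := M.W_cover hxVg
    exact hT _ (hsub ⟨i, rfl⟩) x hx ((M.s_adj i x).2 hxW)
  · intro F _
    simp

end Paper
end

section
/- Let G be a finite simple graph with vertex clique-partition π = {W_1,…,W_d}, and let G^π be the clique-whiskered graph with added vertex set W = {s_1',…,s_d'}. Then the map sending an independent vertex set S of G (including the empty set) to S ∪ {s_i' : S ∩ W_i = ∅} is a bijection from the set of independent vertex sets of G onto the set of maximal independent vertex sets of G^π; its inverse sends a maximal independent set F of G^π to F \ W. -/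
namespace Paper

variable {V : Type*}

/-!
Maximal independent sets are exactly the independent dominating sets. For independent `S ⊆ V(G)`,
the set `S ∪ {s_i' : S ∩ W_i = ∅}` is independent because `s_i'` only sees `W_i`, and dominating
because each clique `W_i` either meets `S` or is seen by `s_i'`. Conversely, a maximal independent
`F` contains `s_i'` exactly when it misses `W_i`, so it is recovered from `F \ W`.
-/

namespace IndepOn

variable {H : SimpleGraph V} {S T : Set V}

theorem mono_s9 (hS : IndepOn H S) (hTS : T ⊆ S) : IndepOn H T :=
  fun x hx y hy => hS x (hTS hx) y (hTS hy)

theorem insert (hS : IndepOn H S) {x : V} (hx : ∀ y ∈ S, ¬ H.Adj x y) :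
    IndepOn H (insert x S) := by
  rintro a (rfl | ha) b (rfl | hb) hab
  · exact H.irrefl hab
  · exact hx b hb hab
  · exact hx a ha hab.symm
  · exact hS a ha b hb hab

end IndepOn

theorem maxIndep_iff {H : SimpleGraph V} {S : Set V} :
    MaxIndep H S ↔ IndepOn H S ∧ ∀ x ∉ S, ∃ y ∈ S, H.Adj x y := by
  refine ⟨fun ⟨hS, hmax⟩ => ⟨hS, fun x hx => ?_⟩, fun ⟨hS, hdom⟩ => ⟨hS, fun T hT hST => ?_⟩⟩
  · by_contra! hnadj
    exact hx (hmax _ (hS.insert hnadj) (Set.subset_insert x S) ▸ Set.mem_insert x S)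
  · refine (Set.Subset.antisymm (fun x hxT => ?_) hST)
    by_contra hxS
    obtain ⟨y, hyS, hxy⟩ := hdom x hxS
    exact hT x hxT y (hST hyS) hxy

namespace CliqueWhiskered

variable {H : SimpleGraph V} {d : ℕ} (M : CliqueWhiskered H d)

def extend (S : Set V) : Set V :=
  S ∪ {y | ∃ i, y = M.sV i ∧ S ∩ M.W i = ∅}

theorem mem_Vg_or_mem_range (x : V) : x ∈ M.Vg ∨ x ∈ Set.range M.sV := by
  rw [← Set.mem_union, ← M.total]
  trivial

theorem notMem_range_of_mem_Vg {x : V} (hx : x ∈ M.Vg) : x ∉ Set.range M.sV := by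
  rintro ⟨i, rfl⟩
  exact M.s_notin i hx

theorem diff_range_subset_Vg (F : Set V) : F \ Set.range M.sV ⊆ M.Vg :=
  fun x hx => (M.mem_Vg_or_mem_range x).resolve_right hx.2

theorem not_adj_sV_sV (i j : Fin d) : ¬ H.Adj (M.sV i) (M.sV j) :=
  fun h => M.s_notin j (M.W_sub i ((M.s_adj i _).1 h))

theorem exists_mem_W (x : V) (hx : x ∈ M.Vg) : ∃ i, x ∈ M.W i := by
  simpa only [Set.mem_iUnion] using M.W_cover hx

theorem extend_diff_range {S : Set V} (hS : S ⊆ M.Vg) : M.extend S \ Set.range M.sV = S := by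
  ext x
  constructor
  · rintro ⟨hxS | ⟨i, rfl, -⟩, hxR⟩
    · exact hxS
    · exact absurd ⟨i, rfl⟩ hxR
  · exact fun hxS => ⟨Or.inl hxS, M.notMem_range_of_mem_Vg (hS hxS)⟩

theorem indepOn_extend {S : Set V} (hS : IndepOn H S) : IndepOn H (M.extend S) := by
  have hwhisker : ∀ i, S ∩ M.W i = ∅ → ∀ x ∈ S, ¬ H.Adj (M.sV i) x :=
    fun i hi x hxS hadj => (Set.eq_empty_iff_forall_notMem.1 hi x) ⟨hxS, (M.s_adj i x).1 hadj⟩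
  rintro x (hxS | ⟨i, rfl, hi⟩) y (hyS | ⟨j, rfl, hj⟩)
  · exact hS x hxS y hyS
  · exact fun h => hwhisker j hj x hxS h.symm
  · exact hwhisker i hi y hyS
  · exact M.not_adj_sV_sV i j

theorem exists_adj_mem_extend_of_notMem {S : Set V} {x : V} (hx : x ∉ M.extend S) :
    ∃ y ∈ M.extend S, H.Adj x y := by
  have hmeet : ∀ i, (S ∩ M.W i).Nonempty ∨ M.sV i ∈ M.extend S := fun i =>
    (Set.eq_empty_or_nonempty (S ∩ M.W i)).symm.imp_right fun hi => Or.inr ⟨i, rfl, hi⟩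
  rcases M.mem_Vg_or_mem_range x with hxV | ⟨i, rfl⟩
  · obtain ⟨i, hxW⟩ := M.exists_mem_W x hxV
    rcases hmeet i with ⟨y, hyS, hyW⟩ | hsi
    · have hxy : x ≠ y := by rintro rfl; exact hx (Or.inl hyS)
      exact ⟨y, Or.inl hyS, M.W_clique i x hxW y hyW hxy⟩
    · exact ⟨M.sV i, hsi, ((M.s_adj i x).2 hxW).symm⟩
  · rcases hmeet i with ⟨y, hyS, hyW⟩ | hsi
    · exact ⟨y, Or.inl hyS, (M.s_adj i y).2 hyW⟩
    · exact absurd hsi hx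

theorem maxIndep_extend {S : Set V} (hS : IndepOn H S) : MaxIndep H (M.extend S) :=
  maxIndep_iff.2 ⟨M.indepOn_extend hS, fun _ => M.exists_adj_mem_extend_of_notMem⟩

theorem extend_diff_range_of_maxIndep {F : Set V} (hF : MaxIndep H F) :
    M.extend (F \ Set.range M.sV) = F := by
  have hWi : ∀ i, (F \ Set.range M.sV) ∩ M.W i = ∅ ↔ ∀ y ∈ F, y ∉ M.W i := fun i => by
    refine ⟨fun h y hyF hyW => ?_,
      fun h => Set.eq_empty_iff_forall_notMem.2 fun y hy => h y hy.1.1 hy.2⟩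
    exact Set.eq_empty_iff_forall_notMem.1 h y
      ⟨⟨hyF, M.notMem_range_of_mem_Vg (M.W_sub i hyW)⟩, hyW⟩
  apply Set.Subset.antisymm
  · rintro x (hx | ⟨i, rfl, hi⟩)
    · exact hx.1
    · by_contra hsi
      obtain ⟨y, hyF, hadj⟩ := (maxIndep_iff.1 hF).2 _ hsi
      exact (hWi i).1 hi y hyF ((M.s_adj i y).1 hadj)
  · intro x hxF
    rcases M.mem_Vg_or_mem_range x with hxV | ⟨i, rfl⟩
    · exact Or.inl ⟨hxF, M.notMem_range_of_mem_Vg hxV⟩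
    · exact Or.inr ⟨i, rfl, (hWi i).2 fun y hyF hyW => hF.1 _ hxF y hyF ((M.s_adj i y).2 hyW)⟩

end CliqueWhiskered

theorem cliqueWhiskered_maxIndep_bijection_general
    (H : SimpleGraph V) (d : ℕ) (M : CliqueWhiskered H d) :
    (∀ S : Set V, S ⊆ M.Vg → IndepOn H S →
      MaxIndep H (S ∪ {y | ∃ i, y = M.sV i ∧ S ∩ M.W i = ∅}) ∧
      (S ∪ {y | ∃ i, y = M.sV i ∧ S ∩ M.W i = ∅}) \ Set.range M.sV = S) ∧
    (∀ F : Set V, MaxIndep H F →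
      F \ Set.range M.sV ⊆ M.Vg ∧ IndepOn H (F \ Set.range M.sV) ∧
      (F \ Set.range M.sV) ∪
        {y | ∃ i, y = M.sV i ∧ (F \ Set.range M.sV) ∩ M.W i = ∅} = F) :=
  ⟨fun _ hSV hS => ⟨M.maxIndep_extend hS, M.extend_diff_range hSV⟩,
    fun F hF => ⟨M.diff_range_subset_Vg F, hF.1.mono_s9 Set.sdiff_subset,
      M.extend_diff_range_of_maxIndep hF⟩⟩

/-- **Theorem.** The map sending an independent vertex set `S` of `G` (possibly empty)
to `S ∪ {s_i' : S ∩ W_i = ∅}` is a bijection from the independent vertex sets of `G`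
onto the maximal independent vertex sets of `G^π`, with inverse `F ↦ F \ W`. -/
theorem cliqueWhiskered_maxIndep_bijection [Fintype V]
    (H : SimpleGraph V) (d : ℕ) (M : CliqueWhiskered H d) :
    (∀ S : Set V, S ⊆ M.Vg → IndepOn H S →
      MaxIndep H (S ∪ {y | ∃ i, y = M.sV i ∧ S ∩ M.W i = ∅}) ∧
      (S ∪ {y | ∃ i, y = M.sV i ∧ S ∩ M.W i = ∅}) \ Set.range M.sV = S) ∧
    (∀ F : Set V, MaxIndep H F →
      F \ Set.range M.sV ⊆ M.Vg ∧ IndepOn H (F \ Set.range M.sV) ∧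
      (F \ Set.range M.sV) ∪
        {y | ∃ i, y = M.sV i ∧ (F \ Set.range M.sV) ∩ M.W i = ∅} = F) :=
  cliqueWhiskered_maxIndep_bijection_general H d M

end Paper
end
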